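/- arXiv:0709.4431 — 5 statements merged into one kernel-verified Lean document; each statement's English description precedes it below -/
import Mathlib

section
/- Let x₀ be a nondegenerate T-periodic limit cycle of ẋ = f(x) (meaning the algebraic multiplicity of the characteristic multiplier +1 of the variational system ẏ = f'(x₀(t))y equals 1). Let A_{n-1} be an n×(n-1) matrix such that the n×n matrix (ẋ₀(0), A_{n-1}) is nonsingular, let Ω(t, t₀, ξ) denote the solution of ẋ = f(x) with Ω(t₀, t₀, ξ) = ξ, and define the surface S(v) = Ω(T, 0, x₀(0) + A_{n-1} v) for v ∈ ℝ^{n-1}. Then ẋ₀(0) does not belong to the image of the derivative S'(0) : ℝ^{n-1} → ℝⁿ, i.e. the surface S intersects the cycle transversally at x₀(0). -/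
/-!
The derivative of `v ↦ Ω(T, 0, x₀(0) + A v)` at `0` is `Y(T) A`: the deviation of a nearby
solution from `x₀`, minus its linearization `s • Y(t) (A w)`, obeys a linear differential
inequality with a small forcing term as long as the solution stays in a thin tube around the
cycle, and Grönwall's inequality in turn keeps it in the tube. Moreover `Y(T)` is injective (a
solution of a linear equation that vanishes once vanishes identically) and fixes `ẋ₀(0)`,
because `t ↦ f(x₀(t))` solves the variational equation and `x₀` is `T`-periodic. So
`ẋ₀(0) = Y(T) A w` would force `A w = ẋ₀(0)`, contradicting the nonsingularity of `(ẋ₀(0), A)`.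
-/
open Set Filter Topology

theorem ContinuousOn.forall_lt_of_forall_Ico_lt_imp_lt {φ : ℝ → ℝ} {a b c : ℝ}
    (hφ : ContinuousOn φ (Icc a b))
    (h : ∀ t ∈ Icc a b, (∀ τ ∈ Ico a t, φ τ < c) → φ t < c) :
    ∀ t ∈ Icc a b, φ t < c := by
  by_contra! hbad
  set F := Icc a b ∩ φ ⁻¹' Ici c
  have hF : IsCompact F :=
    isCompact_Icc.of_isClosed_subset (hφ.preimage_isClosed_of_isClosed isClosed_Icc isClosed_Ici)
      inter_subset_left
  obtain ⟨t, ⟨ht, hct⟩, hmin⟩ := hF.exists_isLeast hbad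
  refine (h t ht fun τ hτ => ?_).not_ge hct
  by_contra! hτc
  exact (hmin ⟨⟨hτ.1, hτ.2.le.trans ht.2⟩, hτc⟩).not_gt hτ.2

theorem gronwallBound_zero_le_mul {K η t T : ℝ} (hK : 0 ≤ K) (hη : 0 ≤ η) (ht : t ≤ T) :
    gronwallBound 0 K η t ≤ η * gronwallBound 0 K 1 T := by
  have hlin : gronwallBound 0 K η t = η * gronwallBound 0 K 1 t := by
    unfold gronwallBound; split_ifs <;> ring
  rw [hlin]
  exact mul_le_mul_of_nonneg_left (gronwallBound_mono le_rfl zero_le_one hK ht) hη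

theorem gronwallBound_zero_nonneg {K η t : ℝ} (hK : 0 ≤ K) (hη : 0 ≤ η) (ht : 0 ≤ t) :
    0 ≤ gronwallBound 0 K η t := by
  simpa [gronwallBound_x0] using gronwallBound_mono le_rfl hη hK ht

section LinearODE

variable {E : Type*} [NormedAddCommGroup E] [NormedSpace ℝ E] {B : ℝ → E →L[ℝ] E} {u v : ℝ → E}

theorem ODE_linear_solution_unique (hB : Continuous B) (hu : ∀ t, HasDerivAt u (B t (u t)) t)
    (hv : ∀ t, HasDerivAt v (B t (v t)) t) {t₀ : ℝ} (h : u t₀ = v t₀) : u = v := by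
  funext t
  obtain ⟨C, hC⟩ := (isCompact_Icc (a := min t₀ t - 1) (b := max t₀ t + 1))
    |>.exists_bound_of_continuousOn hB.continuousOn
  have hlip : ∀ τ ∈ Ioo (min t₀ t - 1) (max t₀ t + 1), LipschitzOnWith C.toNNReal (B τ) univ := by
    intro τ hτ
    have hnorm : ‖B τ‖₊ ≤ C.toNNReal := by
      rw [← NNReal.coe_le_coe, coe_nnnorm]
      exact (hC τ (Ioo_subset_Icc_self hτ)).trans (Real.le_coe_toNNReal C)
    exact ((B τ).lipschitz.weaken hnorm).lipschitzOnWith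
  refine ODE_solution_unique_of_mem_Icc hlip ?_
    (HasDerivAt.continuousOn fun τ _ => hu τ) (fun τ _ => hu τ) (fun _ _ => trivial)
    (HasDerivAt.continuousOn fun τ _ => hv τ) (fun τ _ => hv τ) (fun _ _ => trivial)
    h ?_
  · constructor <;> linarith [min_le_left t₀ t, le_max_left t₀ t]
  · constructor <;> linarith [min_le_right t₀ t, le_max_right t₀ t]

end LinearODE

section Linearization

variable {E F : Type*} [NormedAddCommGroup E] [NormedSpace ℝ E] [NormedAddCommGroup F]
  [NormedSpace ℝ F] {f : E → F} {K : Set E} {ε : ℝ}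

theorem IsCompact.exists_forall_norm_fderiv_sub_le (hK : IsCompact K) (hf : ContDiff ℝ 1 f)
    (hε : 0 < ε) :
    ∃ δ > 0, ∀ x ∈ K, ∀ x', ‖x' - x‖ ≤ δ → ‖fderiv ℝ f x' - fderiv ℝ f x‖ ≤ ε := by
  have hU := hK.uniformContinuousAt_of_continuousAt (fderiv ℝ f)
    (fun x _ => (hf.continuous_fderiv one_ne_zero).continuousAt) (Metric.dist_mem_uniformity hε)
  obtain ⟨δ, hδ, hδU⟩ := Metric.mem_uniformity_dist.1 hU
  refine ⟨δ / 2, half_pos hδ, fun x hx x' hx' => ?_⟩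
  have := @hδU x x' (by rw [dist_comm, dist_eq_norm]; linarith) hx
  rw [← dist_eq_norm, dist_comm]
  exact this.le

theorem IsCompact.exists_forall_norm_sub_sub_fderiv_le (hK : IsCompact K) (hf : ContDiff ℝ 1 f)
    (hε : 0 < ε) :
    ∃ δ > 0, ∀ x ∈ K, ∀ x', ‖x' - x‖ ≤ δ →
      ‖f x' - f x - fderiv ℝ f x (x' - x)‖ ≤ ε * ‖x' - x‖ := by
  obtain ⟨δ, hδ, hδK⟩ := hK.exists_forall_norm_fderiv_sub_le hf hε
  refine ⟨δ, hδ, fun x hx x' hx' => ?_⟩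
  have hderiv : ∀ z ∈ Metric.closedBall x δ, HasFDerivWithinAt (fun z => f z - fderiv ℝ f x z)
      (fderiv ℝ f z - fderiv ℝ f x) (Metric.closedBall x δ) z := fun z _ =>
    (((hf.differentiable one_ne_zero) z).hasFDerivAt.sub
      (fderiv ℝ f x).hasFDerivAt).hasFDerivWithinAt
  have := (convex_closedBall x δ).norm_image_sub_le_of_norm_hasFDerivWithin_le hderiv
    (fun z hz => hδK x hx z (mem_closedBall_iff_norm.1 hz)) (Metric.mem_closedBall_self hδ.le)
    (mem_closedBall_iff_norm.2 hx')
  rwa [map_sub, sub_sub_sub_comm]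

end Linearization

section Variational

variable {E : Type*} [NormedAddCommGroup E] [NormedSpace ℝ E] {f : E → E} {x₀ γ y : ℝ → E}
  {T s L M ε δ : ℝ}

theorem norm_sub_sub_smul_le_gronwallBound_of_forall_Ico_lt
    (hx₀ : ∀ t ∈ Icc 0 T, HasDerivAt x₀ (f (x₀ t)) t)
    (hγ : ∀ t ∈ Icc 0 T, HasDerivAt γ (f (γ t)) t)
    (hy : ∀ t ∈ Icc 0 T, HasDerivAt y (fderiv ℝ f (x₀ t) (y t)) t)
    (hγ0 : γ 0 = x₀ 0 + s • y 0)
    (hL : ∀ t ∈ Icc 0 T, ‖fderiv ℝ f (x₀ t)‖ ≤ L) (hM : ∀ t ∈ Icc 0 T, ‖y t‖ ≤ M)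
    (hε0 : 0 ≤ ε) (hε1 : ε ≤ 1)
    (hrem : ∀ t ∈ Icc 0 T, ∀ x, ‖x - x₀ t‖ ≤ δ →
      ‖f x - f (x₀ t) - fderiv ℝ f (x₀ t) (x - x₀ t)‖ ≤ ε * ‖x - x₀ t‖) :
    ∀ t ∈ Icc 0 T, (∀ τ ∈ Ico 0 t, ‖γ τ - x₀ τ‖ < δ) →
      ‖γ t - x₀ t - s • y t‖ ≤ gronwallBound 0 (L + 1) (ε * |s| * M) t := by
  intro t ht htube
  have hsub : Icc 0 t ⊆ Icc 0 T := Icc_subset_Icc_right ht.2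
  have hw : ∀ τ ∈ Icc 0 t, HasDerivAt (fun τ => γ τ - x₀ τ - s • y τ)
      (f (γ τ) - f (x₀ τ) - s • fderiv ℝ f (x₀ τ) (y τ)) τ := fun τ hτ =>
    ((hγ τ (hsub hτ)).sub (hx₀ τ (hsub hτ))).sub ((hy τ (hsub hτ)).const_smul s)
  have hbound : ∀ τ ∈ Ico 0 t, ‖f (γ τ) - f (x₀ τ) - s • fderiv ℝ f (x₀ τ) (y τ)‖ ≤
      (L + 1) * ‖γ τ - x₀ τ - s • y τ‖ + ε * |s| * M := by
    intro τ hτ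
    have hτ' : τ ∈ Icc 0 T := hsub (Ico_subset_Icc_self hτ)
    set w := γ τ - x₀ τ - s • y τ
    set D := fderiv ℝ f (x₀ τ)
    have hsplit : f (γ τ) - f (x₀ τ) - s • D (y τ) =
        (f (γ τ) - f (x₀ τ) - D (γ τ - x₀ τ)) + D w := by
      simp only [w, map_sub, map_smul]; abel
    have hdev : ‖γ τ - x₀ τ‖ ≤ ‖w‖ + |s| * M := calc
      ‖γ τ - x₀ τ‖ = ‖w + s • y τ‖ := by rw [sub_add_cancel]
      _ ≤ ‖w‖ + |s| * M := (norm_add_le _ _).trans (by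
          rw [norm_smul, Real.norm_eq_abs]; gcongr; exact hM τ hτ')
    have hR := hrem τ hτ' (γ τ) (htube τ hτ).le
    have hDw : ‖D w‖ ≤ L * ‖w‖ := D.le_of_opNorm_le (hL τ hτ') w
    rw [hsplit]
    calc _ ≤ ε * ‖γ τ - x₀ τ‖ + L * ‖w‖ := (norm_add_le _ _).trans (add_le_add hR hDw)
      _ ≤ (L + 1) * ‖w‖ + ε * |s| * M := by
        nlinarith [mul_le_mul_of_nonneg_left hdev hε0,
          mul_le_mul_of_nonneg_right hε1 (norm_nonneg w)]
  simpa using norm_le_gronwallBound_of_norm_deriv_right_le (δ := 0)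
    (HasDerivAt.continuousOn hw)
    (fun τ hτ => (hw τ (Ico_subset_Icc_self hτ)).hasDerivWithinAt) (by simp [hγ0]) hbound
    t (right_mem_Icc.2 ht.1)

theorem norm_sub_sub_smul_le_of_abs_mul_lt (hT : 0 ≤ T)
    (hx₀ : ∀ t ∈ Icc 0 T, HasDerivAt x₀ (f (x₀ t)) t)
    (hγ : ∀ t ∈ Icc 0 T, HasDerivAt γ (f (γ t)) t)
    (hy : ∀ t ∈ Icc 0 T, HasDerivAt y (fderiv ℝ f (x₀ t) (y t)) t)
    (hγ0 : γ 0 = x₀ 0 + s • y 0)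
    (hL : ∀ t ∈ Icc 0 T, ‖fderiv ℝ f (x₀ t)‖ ≤ L) (hM : ∀ t ∈ Icc 0 T, ‖y t‖ ≤ M)
    (hε0 : 0 ≤ ε) (hε1 : ε ≤ 1)
    (hrem : ∀ t ∈ Icc 0 T, ∀ x, ‖x - x₀ t‖ ≤ δ →
      ‖f x - f (x₀ t) - fderiv ℝ f (x₀ t) (x - x₀ t)‖ ≤ ε * ‖x - x₀ t‖)
    (hs : |s| * M * (gronwallBound 0 (L + 1) 1 T + 1) < δ) :
    ‖γ T - x₀ T - s • y T‖ ≤ ε * |s| * M * gronwallBound 0 (L + 1) 1 T := by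
  set Φ := gronwallBound 0 (L + 1) 1 T
  have hL0 : 0 ≤ L := (norm_nonneg _).trans (hL 0 (left_mem_Icc.2 hT))
  have hM0 : 0 ≤ M := (norm_nonneg _).trans (hM 0 (left_mem_Icc.2 hT))
  have hΦ0 : 0 ≤ Φ := gronwallBound_zero_nonneg (by linarith) zero_le_one hT
  have hgron :=
    norm_sub_sub_smul_le_gronwallBound_of_forall_Ico_lt hx₀ hγ hy hγ0 hL hM hε0 hε1 hrem
  have hΦ : ∀ t ∈ Icc 0 T, gronwallBound 0 (L + 1) (ε * |s| * M) t ≤ ε * |s| * M * Φ :=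
    fun t ht => gronwallBound_zero_le_mul (by linarith) (by positivity) ht.2
  have htube : ∀ t ∈ Icc 0 T, ‖γ t - x₀ t‖ < δ := by
    refine ((HasDerivAt.continuousOn hγ).sub (HasDerivAt.continuousOn hx₀)).norm
      |>.forall_lt_of_forall_Ico_lt_imp_lt fun t ht hpre => ?_
    calc ‖γ t - x₀ t‖ = ‖(γ t - x₀ t - s • y t) + s • y t‖ := by rw [sub_add_cancel]
      _ ≤ ε * |s| * M * Φ + |s| * M := norm_add_le_of_le ((hgron t ht hpre).trans (hΦ t ht))
          (by rw [norm_smul, Real.norm_eq_abs]; gcongr; exact hM t ht)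
      _ ≤ |s| * M * (Φ + 1) := by
          nlinarith [mul_nonneg (mul_nonneg (abs_nonneg s) hM0) hΦ0]
      _ < δ := hs
  exact (hgron T (right_mem_Icc.2 hT) fun τ hτ => htube τ (Ico_subset_Icc_self hτ)).trans
    (hΦ T (right_mem_Icc.2 hT))

theorem hasDerivAt_solution_of_variational (hf : ContDiff ℝ 1 f) (hT : 0 ≤ T)
    (hx₀ : ∀ t ∈ Icc 0 T, HasDerivAt x₀ (f (x₀ t)) t)
    (hy : ∀ t ∈ Icc 0 T, HasDerivAt y (fderiv ℝ f (x₀ t) (y t)) t)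
    {γ : ℝ → ℝ → E} (hγ : ∀ s, ∀ t ∈ Icc 0 T, HasDerivAt (γ s) (f (γ s t)) t)
    (hγ0 : ∀ s, γ s 0 = x₀ 0 + s • y 0) :
    HasDerivAt (fun s => γ s T) (y T) 0 := by
  obtain ⟨L, hL⟩ := isCompact_Icc.exists_bound_of_continuousOn
    ((hf.continuous_fderiv one_ne_zero).comp_continuousOn (HasDerivAt.continuousOn hx₀))
  obtain ⟨M, hM⟩ := isCompact_Icc.exists_bound_of_continuousOn (HasDerivAt.continuousOn hy)
  set Φ := gronwallBound 0 (L + 1) 1 T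
  have hbound : ∀ ε ∈ Ioc (0 : ℝ) 1, ∀ᶠ s in 𝓝 0,
      ‖γ s T - x₀ T - s • y T‖ ≤ ε * |s| * M * Φ := by
    rintro ε ⟨hε0, hε1⟩
    obtain ⟨δ, hδ, hrem⟩ := (isCompact_Icc.image_of_continuousOn
      (HasDerivAt.continuousOn hx₀)).exists_forall_norm_sub_sub_fderiv_le hf hε0
    have hsmall : Tendsto (fun s : ℝ => |s| * M * (Φ + 1)) (𝓝 0) (𝓝 0) := by
      have hcont : Continuous fun s : ℝ => |s| * M * (Φ + 1) := by fun_prop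
      simpa using hcont.tendsto 0
    filter_upwards [hsmall.eventually (gt_mem_nhds hδ)] with s hs
    exact norm_sub_sub_smul_le_of_abs_mul_lt hT hx₀ (hγ s) hy (hγ0 s) hL hM hε0.le hε1
      (fun t ht => hrem _ (mem_image_of_mem _ ht)) hs
  have hγ0T : γ 0 T = x₀ T := by
    simpa [sub_eq_zero] using (hbound 1 ⟨one_pos, le_rfl⟩).self_of_nhds
  have hM0 : 0 ≤ M := (norm_nonneg _).trans (hM 0 (left_mem_Icc.2 hT))
  have hΦ0 : 0 ≤ Φ := gronwallBound_zero_nonneg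
    (by linarith [(norm_nonneg _).trans (hL 0 (left_mem_Icc.2 hT))]) zero_le_one hT
  rw [hasDerivAt_iff_isLittleO, Asymptotics.isLittleO_iff]
  intro c hc
  set ε := min 1 (c / (M * Φ + 1))
  have hεc : ε * (M * Φ) ≤ c := calc
    ε * (M * Φ) ≤ c / (M * Φ + 1) * (M * Φ + 1) := by
      gcongr
      · exact min_le_right _ _
      · linarith
    _ = c := div_mul_cancel₀ c (by positivity)
  filter_upwards [hbound ε ⟨by positivity, min_le_left _ _⟩] with s hs
  rw [hγ0T, sub_zero, Real.norm_eq_abs]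
  calc _ ≤ ε * |s| * M * Φ := hs
    _ = ε * (M * Φ) * |s| := by ring
    _ ≤ c * |s| := by gcongr

end Variational

theorem cycle_transversal_to_surface_general
    (n : ℕ) (f : EuclideanSpace ℝ (Fin n) → EuclideanSpace ℝ (Fin n))
    (hf : ContDiff ℝ 1 f)
    (T : ℝ) (hT : 0 < T)
    (x₀ : ℝ → EuclideanSpace ℝ (Fin n))
    (hx₀ : ∀ t, HasDerivAt x₀ (f (x₀ t)) t)
    (hper : Function.Periodic x₀ T)
    -- the flow Ω(t, t₀, ξ)
    (Ω : ℝ → ℝ → EuclideanSpace ℝ (Fin n) → EuclideanSpace ℝ (Fin n))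
    (hΩ_init : ∀ t₀ ξ, Ω t₀ t₀ ξ = ξ)
    (hΩ_sol : ∀ t t₀ ξ, HasDerivAt (fun s => Ω s t₀ ξ) (f (Ω t t₀ ξ)) t)
    -- the normalized fundamental matrix of the variational system and nondegeneracy
    (Y : ℝ → (EuclideanSpace ℝ (Fin n) →L[ℝ] EuclideanSpace ℝ (Fin n)))
    (hY0 : Y 0 = ContinuousLinearMap.id ℝ (EuclideanSpace ℝ (Fin n)))
    (hY : ∀ t, HasDerivAt Y ((fderiv ℝ f (x₀ t)).comp (Y t)) t)
    -- the matrix A_{n-1} with (ẋ₀(0), A_{n-1}) nonsingular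
    (A : EuclideanSpace ℝ (Fin (n - 1)) →L[ℝ] EuclideanSpace ℝ (Fin n))
    (hA : ∀ (c : ℝ) (v : EuclideanSpace ℝ (Fin (n - 1))),
      c • f (x₀ 0) + A v = 0 → c = 0 ∧ v = 0)
    -- the surface S and its derivative at 0
    (S : EuclideanSpace ℝ (Fin (n - 1)) → EuclideanSpace ℝ (Fin n))
    (hS : ∀ v, S v = Ω T 0 (x₀ 0 + A v))
    (S' : EuclideanSpace ℝ (Fin (n - 1)) →L[ℝ] EuclideanSpace ℝ (Fin n))
    (hS' : HasFDerivAt S S' 0) :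
    f (x₀ 0) ∉ Set.range S' := by
  rintro ⟨w, hw⟩
  set B := fun t => fderiv ℝ f (x₀ t)
  have hB : Continuous B := (hf.continuous_fderiv one_ne_zero).comp
    (continuous_iff_continuousAt.2 fun t => (hx₀ t).continuousAt)
  have hYsol : ∀ u t, HasDerivAt (fun t => Y t u) (B t (Y t u)) t := fun u t => by
    simpa using (hY t).clm_apply (hasDerivAt_const t u)
  have hYf : Y T (f (x₀ 0)) = f (x₀ 0) := by
    have hfx₀ : ∀ t, HasDerivAt (fun t => f (x₀ t)) (B t (f (x₀ t))) t := fun t =>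
      ((hf.differentiable one_ne_zero) (x₀ t)).hasFDerivAt.comp_hasDerivAt t (hx₀ t)
    rw [congrFun (ODE_linear_solution_unique hB (hYsol _) hfx₀ (t₀ := 0) (by simp [hY0])) T,
      hper.eq]
  have hYinj : ∀ u, Y T u = 0 → u = 0 := fun u hu => by
    have hzero : ∀ t, HasDerivAt (fun _ => (0 : EuclideanSpace ℝ (Fin n))) (B t 0) t :=
      fun t => by simpa using hasDerivAt_const t (0 : EuclideanSpace ℝ (Fin n))
    simpa [hY0] using congrFun (ODE_linear_solution_unique hB (hYsol u) hzero hu) 0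
  have hS'w : S' w = Y T (A w) := by
    have hline : HasDerivAt (fun s : ℝ => s • w) w 0 := by
      simpa using (hasDerivAt_id (0 : ℝ)).smul_const w
    have hSline : HasDerivAt (fun s : ℝ => S (s • w)) (S' w) 0 :=
      (by rwa [zero_smul] : HasFDerivAt S S' ((0 : ℝ) • w)).comp_hasDerivAt 0 hline
    have hflow := hasDerivAt_solution_of_variational hf hT.le (fun t _ => hx₀ t)
      (fun t _ => hYsol (A w) t) (γ := fun s t => Ω t 0 (x₀ 0 + s • A w))
      (fun s t _ => hΩ_sol t 0 _) (fun s => by simp [hΩ_init, hY0])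
    exact hSline.unique (by simpa [hS] using hflow)
  have hAw : f (x₀ 0) = A w := by
    refine sub_eq_zero.1 (hYinj _ ?_)
    rw [map_sub, hYf, ← hS'w, hw, sub_self]
  exact one_ne_zero (hA 1 (-w) (by simp [← hAw])).1

/-- Lemma 2.1, transversality: if `x₀` is a nondegenerate `T`-periodic limit
cycle of `ẋ = f(x)` (the characteristic multiplier `+1` of the variational system has
algebraic multiplicity one), `A` an `n×(n-1)` matrix with `(ẋ₀(0), A)` nonsingular and
`S(v) = Ω(T,0,x₀(0) + A v)`, then `ẋ₀(0) ∉ S'(0)(ℝ^{n-1})`. -/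
theorem cycle_transversal_to_surface
    (n : ℕ) (f : EuclideanSpace ℝ (Fin n) → EuclideanSpace ℝ (Fin n))
    (hf : ContDiff ℝ 1 f)
    (T : ℝ) (hT : 0 < T)
    (x₀ : ℝ → EuclideanSpace ℝ (Fin n))
    (hx₀ : ∀ t, HasDerivAt x₀ (f (x₀ t)) t)
    (hper : Function.Periodic x₀ T)
    -- the flow Ω(t, t₀, ξ)
    (Ω : ℝ → ℝ → EuclideanSpace ℝ (Fin n) → EuclideanSpace ℝ (Fin n))
    (hΩ_init : ∀ t₀ ξ, Ω t₀ t₀ ξ = ξ)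
    (hΩ_sol : ∀ t t₀ ξ, HasDerivAt (fun s => Ω s t₀ ξ) (f (Ω t t₀ ξ)) t)
    -- the normalized fundamental matrix of the variational system and nondegeneracy
    (Y : ℝ → (EuclideanSpace ℝ (Fin n) →L[ℝ] EuclideanSpace ℝ (Fin n)))
    (hY0 : Y 0 = ContinuousLinearMap.id ℝ (EuclideanSpace ℝ (Fin n)))
    (hY : ∀ t, HasDerivAt Y ((fderiv ℝ f (x₀ t)).comp (Y t)) t)
    (hnondeg : Module.finrank ℝ
      ↥(⨆ k : ℕ, LinearMap.ker (((Y T : Module.End ℝ (EuclideanSpace ℝ (Fin n))) - 1) ^ k)) = 1)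
    -- the matrix A_{n-1} with (ẋ₀(0), A_{n-1}) nonsingular
    (A : EuclideanSpace ℝ (Fin (n - 1)) →L[ℝ] EuclideanSpace ℝ (Fin n))
    (hA : ∀ (c : ℝ) (v : EuclideanSpace ℝ (Fin (n - 1))),
      c • f (x₀ 0) + A v = 0 → c = 0 ∧ v = 0)
    -- the surface S and its derivative at 0
    (S : EuclideanSpace ℝ (Fin (n - 1)) → EuclideanSpace ℝ (Fin n))
    (hS : ∀ v, S v = Ω T 0 (x₀ 0 + A v))
    (S' : EuclideanSpace ℝ (Fin (n - 1)) →L[ℝ] EuclideanSpace ℝ (Fin n))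
    (hS' : HasFDerivAt S S' 0) :
    f (x₀ 0) ∉ Set.range S' :=
  cycle_transversal_to_surface_general n f hf T hT x₀ hx₀ hper Ω hΩ_init hΩ_sol Y hY0 hY A hA S hS
    S' hS'
end

section
/- (Theorem on the first-order asymptotics, Theorem 3.1.) Let x₀ be a nondegenerate T-periodic limit cycle of ẋ = f(x), let x_ε be T-periodic solutions of ẋ = f(x) + ε g(t,x,ε) with Δ_ε → 0 and ‖x_ε(t+Δ_ε) − x₀(t)‖ ≤ M ε for all t ∈ [0,T] and ε ∈ (0, ε₀]. Let z be a not-T-periodic Floquet eigenfunction of the adjoint system ż = −(f'(x₀(t)))* z with multiplier ρ ≠ 1. Then (1/ε) ⟨z(t), x_ε(t+Δ_ε) − x₀(t)⟩ → M⊥_z(t) := (ρ/(ρ−1)) ∫_{t−T}^{t} ⟨z(s), g(s, x₀(s), 0)⟩ ds as ε → 0, uniformly in t ∈ [0,T]. -/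
/-!
Write `u_ε(t) = x_ε(t + Δ_ε) - x₀(t)` and `A(t) = f'(x₀(t))`. Pairing with a solution of the
adjoint system kills the linear part of the equation for `u_ε`:
`d/dt ⟪z, u_ε⟫ = ⟪z, u_ε' - A u_ε⟫ = ⟪z, R(u_ε) + ε g(t + Δ_ε, x_ε(t + Δ_ε), ε)⟫`, where `R` is the
Taylor remainder of `f` at `x₀(t)`. Integrating over a period, periodicity of `u_ε` and
`z(t + T) = ρ z(t)` give `(ρ - 1) ⟪z(t), u_ε(t)⟫ = ∫_t^{t+T} ⟪z, R(u_ε) + ε g⟫`. As `‖u_ε‖ ≤ M ε`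
and `f` is `C¹` on a compact neighbourhood of the cycle, `R(u_ε) = o(ε)` uniformly, while the
`g` term converges uniformly to `⟪z(s), g(s, x₀(s), 0)⟫`. Dividing by `ε` yields the limit
`(ρ - 1)⁻¹ ∫_t^{t+T} ⟪z, g(·, x₀, 0)⟫`, which equals `ρ/(ρ - 1) ∫_{t-T}^t ⟪z, g(·, x₀, 0)⟫` because
this integrand is multiplied by `ρ` under the shift by `T`.
-/

open Set Filter Topology Function MeasureTheory intervalIntegral
open scoped RealInnerProductSpace

theorem Continuous.comp_tendstoUniformlyOn_of_isCompact {ι X α β : Type*}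
    [PseudoMetricSpace α] [ProperSpace α] [UniformSpace β] {G : α → β} (hG : Continuous G)
    {l : Filter ι} {S : Set X} {p : ι → X → α} {p₀ : X → α}
    (h : TendstoUniformlyOn p p₀ l S) (hK : IsCompact (p₀ '' S)) :
    TendstoUniformlyOn (fun i x => G (p i x)) (fun x => G (p₀ x)) l S := by
  refine UniformContinuousOn.comp_tendstoUniformlyOn_eventually
    (s := Metric.cthickening 1 (p₀ '' S)) ?_
    (fun x hx => Metric.self_subset_cthickening _ (mem_image_of_mem p₀ hx))
    (hK.cthickening.uniformContinuousOn_of_continuous hG.continuousOn) h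
  filter_upwards [Metric.tendstoUniformlyOn_iff.mp h 1 one_pos] with i hi x hx
  exact Metric.mem_cthickening_of_dist_le _ _ _ _ (mem_image_of_mem p₀ hx)
    (dist_comm (p₀ x) _ ▸ (hi x hx).le)

theorem TendstoUniformlyOn.intervalIntegral_sliding {ι E : Type*} [NormedAddCommGroup E]
    [NormedSpace ℝ E] {F : ι → ℝ → E} {G : ℝ → E} {l : Filter ι} {S I : Set ℝ} {T : ℝ}
    (h : TendstoUniformlyOn F G l S) (hIS : ∀ t ∈ I, uIcc t (t + T) ⊆ S)
    (hF : ∀ᶠ i in l, ∀ t ∈ I, IntervalIntegrable (F i) volume t (t + T))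
    (hG : ∀ t ∈ I, IntervalIntegrable G volume t (t + T)) :
    TendstoUniformlyOn (fun i t => ∫ s in t..t + T, F i s) (fun t => ∫ s in t..t + T, G s)
      l I := by
  rw [Metric.tendstoUniformlyOn_iff] at h ⊢
  intro δ hδ
  have hδ' : 0 < δ / (|T| + 1) := by positivity
  filter_upwards [h _ hδ', hF] with i hi hFi t ht
  rw [dist_eq_norm, ← integral_sub (hG t ht) (hFi t ht)]
  calc ‖∫ s in t..t + T, G s - F i s‖ ≤ δ / (|T| + 1) * |t + T - t| :=
        norm_integral_le_of_norm_le_const fun s hs =>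
          (dist_eq_norm (G s) _ ▸ hi s (hIS t ht (uIoc_subset_uIcc hs))).le
    _ < δ := by
      rw [add_sub_cancel_left, div_mul_eq_mul_div, div_lt_iff₀ (by positivity)]
      nlinarith [abs_nonneg T]

theorem IsCompact.exists_pos_forall_norm_taylor_remainder_le {E F : Type*}
    [NormedAddCommGroup E] [NormedSpace ℝ E] [ProperSpace E] [NormedAddCommGroup F]
    [NormedSpace ℝ F] {f : E → F} (hf : ContDiff ℝ 1 f) {C : Set E} (hC : IsCompact C)
    {δ : ℝ} (hδ : 0 < δ) :
    ∃ η > 0, ∀ a ∈ C, ∀ v, ‖v‖ ≤ η → ‖f (a + v) - f a - fderiv ℝ f a v‖ ≤ δ * ‖v‖ := by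
  obtain ⟨η, hη, hDf⟩ := Metric.uniformContinuousOn_iff.mp
    ((hC.cthickening (r := 1)).uniformContinuousOn_of_continuous
      (hf.continuous_fderiv one_ne_zero).continuousOn) δ hδ
  refine ⟨min (η / 2) 1, by positivity, fun a ha v hv => ?_⟩
  have hball : ∀ b ∈ Metric.closedBall a (min (η / 2) 1),
      ‖fderiv ℝ f b - fderiv ℝ f a‖ ≤ δ := fun b hb => by
    rw [Metric.mem_closedBall] at hb
    rw [← dist_eq_norm]
    refine (hDf b (Metric.mem_cthickening_of_dist_le _ _ _ _ ha (hb.trans (min_le_right _ _)))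
      a (Metric.self_subset_cthickening _ ha) ?_).le
    linarith [min_le_left (η / 2) 1]
  simpa using (convex_closedBall a _).norm_image_sub_le_of_norm_fderiv_le'
    (fun b _ => (hf.differentiable one_ne_zero) b) hball
    (Metric.mem_closedBall_self (by positivity)) (y := a + v)
    (by rwa [Metric.mem_closedBall, dist_eq_norm, add_sub_cancel_left])

theorem tendstoUniformlyOn_zero_of_norm_le_mul {X E : Type*} [NormedAddCommGroup E]
    {S : Set X} {u : ℝ → X → E} {M : ℝ} (hu : ∀ᶠ ε in 𝓝[>] 0, ∀ s ∈ S, ‖u ε s‖ ≤ M * ε) :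
    TendstoUniformlyOn u 0 (𝓝[>] 0) S := by
  rw [Metric.tendstoUniformlyOn_iff]
  intro δ hδ
  have hMε : Tendsto (fun ε : ℝ => M * ε) (𝓝[>] 0) (𝓝 0) :=
    tendsto_nhdsWithin_of_tendsto_nhds (by simpa using (continuous_const_mul M).tendsto 0)
  filter_upwards [hu, hMε.eventually (gt_mem_nhds hδ)] with ε huε hε s hs
  simpa using (huε s hs).trans_lt hε

theorem tendstoUniformlyOn_inv_mul_inner_taylor_remainder {X E F : Type*} [TopologicalSpace X]
    [NormedAddCommGroup E] [NormedSpace ℝ E] [ProperSpace E] [NormedAddCommGroup F]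
    [InnerProductSpace ℝ F] {f : E → F} (hf : ContDiff ℝ 1 f) {S : Set X} (hS : IsCompact S)
    {z : X → F} {x₀ : X → E} (hz : ContinuousOn z S) (hx₀ : ContinuousOn x₀ S)
    {u : ℝ → X → E} {M : ℝ} (hu : ∀ᶠ ε in 𝓝[>] 0, ∀ s ∈ S, ‖u ε s‖ ≤ M * ε) :
    TendstoUniformlyOn
      (fun ε s => ε⁻¹ * ⟪z s, f (x₀ s + u ε s) - f (x₀ s) - fderiv ℝ f (x₀ s) (u ε s)⟫) 0
      (𝓝[>] 0) S := by
  obtain ⟨Z, hZ⟩ := hS.exists_bound_of_continuousOn hz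
  set Z' := max Z 1
  set M' := max M 1
  rw [Metric.tendstoUniformlyOn_iff]
  intro δ hδ
  obtain ⟨η, hη, hR⟩ := (hS.image_of_continuousOn hx₀).exists_pos_forall_norm_taylor_remainder_le
    hf (δ := δ / (2 * Z' * M')) (by positivity)
  filter_upwards [hu, Ioo_mem_nhdsGT (show 0 < η / M' by positivity)] with ε huε hε s hs
  have hu_le : ‖u ε s‖ ≤ M' * ε := (huε s hs).trans (by gcongr; exacts [hε.1.le, le_max_left _ _])
  have hRs := hR _ (mem_image_of_mem _ hs) _
    (hu_le.trans (by have := hε.2; rw [lt_div_iff₀ (by positivity)] at this; linarith))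
  rw [Pi.zero_apply, dist_zero_left, norm_mul, norm_inv, Real.norm_of_nonneg hε.1.le,
    inv_mul_lt_iff₀ hε.1]
  calc _ ≤ ‖z s‖ * ‖f (x₀ s + u ε s) - f (x₀ s) - fderiv ℝ f (x₀ s) (u ε s)‖ :=
        norm_inner_le_norm _ _
    _ ≤ Z' * (δ / (2 * Z' * M') * (M' * ε)) := by
        gcongr
        · exact (hZ s hs).trans (le_max_left _ _)
        · exact hRs.trans (by gcongr)
    _ = Z' * M' / (Z' * M') * (ε * δ / 2) := by ring
    _ = ε * δ / 2 := by rw [div_self (by positivity), one_mul]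
    _ < ε * δ := by linarith [mul_pos hε.1 hδ]

theorem tendstoUniformlyOn_inner_perturbation {E F : Type*} [NormedAddCommGroup E]
    [NormedSpace ℝ E] [ProperSpace E] [NormedAddCommGroup F] [InnerProductSpace ℝ F]
    {g : ℝ → E → ℝ → F} (hg : Continuous fun p : ℝ × E × ℝ => g p.1 p.2.1 p.2.2)
    {z : ℝ → F} {x₀ : ℝ → E} (hz : Continuous z) (hx₀ : Continuous x₀) {S : Set ℝ}
    (hS : IsCompact S) {u : ℝ → ℝ → E} {Δ : ℝ → ℝ} (hu : TendstoUniformlyOn u 0 (𝓝[>] 0) S)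
    (hΔ : Tendsto Δ (𝓝[>] 0) (𝓝 0)) :
    TendstoUniformlyOn (fun ε s => ⟪z s, g (s + Δ ε) (x₀ s + u ε s) ε⟫)
      (fun s => ⟪z s, g s (x₀ s) 0⟫) (𝓝[>] 0) S := by
  have hp : TendstoUniformlyOn (fun ε s => (s, s + Δ ε, x₀ s + u ε s, ε))
      (fun s => (s, s, x₀ s, (0 : ℝ))) (𝓝[>] 0) S := by
    rw [Metric.tendstoUniformlyOn_iff] at hu ⊢
    intro δ hδ
    filter_upwards [hu δ hδ, hΔ (Metric.ball_mem_nhds 0 hδ), Ioo_mem_nhdsGT hδ]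
      with ε huε hΔε hε s hs
    simp only [Pi.zero_apply, dist_zero_left] at huε
    rw [mem_preimage, mem_ball_zero_iff] at hΔε
    simp only [Prod.dist_eq, dist_self, dist_self_add_right, dist_zero_left]
    exact max_lt hδ (max_lt hΔε (max_lt (huε s hs) (by simpa [abs_of_pos hε.1] using hε.2)))
  exact ((hz.comp continuous_fst).inner (hg.comp continuous_snd))
    |>.comp_tendstoUniformlyOn_of_isCompact hp (hS.image (by fun_prop))

theorem tendstoUniformlyOn_inv_mul_inner_remainder_add_perturbation {E F : Type*}
    [NormedAddCommGroup E] [NormedSpace ℝ E] [ProperSpace E] [NormedAddCommGroup F]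
    [InnerProductSpace ℝ F] {f : E → F} (hf : ContDiff ℝ 1 f) {g : ℝ → E → ℝ → F}
    (hg : Continuous fun p : ℝ × E × ℝ => g p.1 p.2.1 p.2.2) {S : Set ℝ} (hS : IsCompact S)
    {z : ℝ → F} {x₀ : ℝ → E} (hz : Continuous z) (hx₀ : Continuous x₀) {u : ℝ → ℝ → E}
    {M : ℝ} (hu : ∀ᶠ ε in 𝓝[>] 0, ∀ s ∈ S, ‖u ε s‖ ≤ M * ε) {Δ : ℝ → ℝ}
    (hΔ : Tendsto Δ (𝓝[>] 0) (𝓝 0)) :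
    TendstoUniformlyOn
      (fun ε s => ε⁻¹ * ⟪z s, f (x₀ s + u ε s) + ε • g (s + Δ ε) (x₀ s + u ε s) ε - f (x₀ s)
        - fderiv ℝ f (x₀ s) (u ε s)⟫)
      (fun s => ⟪z s, g s (x₀ s) 0⟫) (𝓝[>] 0) S := by
  have h := (tendstoUniformlyOn_inv_mul_inner_taylor_remainder hf hS hz.continuousOn
    hx₀.continuousOn hu).add (tendstoUniformlyOn_inner_perturbation hg hz hx₀ hS
      (tendstoUniformlyOn_zero_of_norm_le_mul hu) hΔ)
  refine (h.congr ?_).congr_right fun s _ => zero_add _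
  filter_upwards [self_mem_nhdsWithin] with ε (hε : 0 < ε) s _
  dsimp only [Pi.add_apply]
  simp only [inner_add_right, inner_sub_right, real_inner_smul_right]
  field_simp
  ring

theorem integral_add_period_eq_mul_integral_sub_period {q : ℝ → ℝ} {T ρ : ℝ}
    (hq : ∀ s, q (s + T) = ρ * q s) (t : ℝ) :
    ∫ s in t..t + T, q s = ρ * ∫ s in t - T..t, q s := by
  calc ∫ s in t..t + T, q s = ∫ s in t - T..t, q (s + T) := by
        rw [integral_comp_add_right, sub_add_cancel]
    _ = ρ * ∫ s in t - T..t, q s := by simp only [hq, intervalIntegral.integral_const_mul]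

theorem integral_period_inner_eq_of_adjoint_floquet {E : Type*} [NormedAddCommGroup E]
    [InnerProductSpace ℝ E] [CompleteSpace E] {A : ℝ → E →L[ℝ] E} {z u u' : ℝ → E} {T ρ : ℝ}
    (hz : ∀ t, HasDerivAt z ((-ContinuousLinearMap.adjoint (A t)) (z t)) t)
    (hzF : ∀ t, z (t + T) = ρ • z t) (hu : ∀ t, HasDerivAt u (u' t) t) (hper : Periodic u T)
    (t : ℝ) (hint : IntervalIntegrable (fun s => ⟪z s, u' s - A s (u s)⟫) volume t (t + T)) :
    ∫ s in t..t + T, ⟪z s, u' s - A s (u s)⟫ = (ρ - 1) * ⟪z t, u t⟫ := by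
  have hderiv : ∀ s, HasDerivAt (fun s => ⟪z s, u s⟫) ⟪z s, u' s - A s (u s)⟫ s := fun s => by
    refine ((hz s).inner ℝ (hu s)).congr_deriv ?_
    rw [neg_apply, inner_neg_left, ContinuousLinearMap.adjoint_inner_left,
      inner_sub_right, sub_eq_add_neg]
  rw [integral_eq_sub_of_hasDerivAt (fun s _ => hderiv s) hint, hper, hzF, real_inner_smul_left]
  ring

theorem tendstoUniformlyOn_inv_mul_inner_of_periodic_perturbation {E : Type*}
    [NormedAddCommGroup E] [InnerProductSpace ℝ E] [ProperSpace E] {f : E → E}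
    (hf : ContDiff ℝ 1 f) {g : ℝ → E → ℝ → E}
    (hg : Continuous fun p : ℝ × E × ℝ => g p.1 p.2.1 p.2.2) {T : ℝ} (hT : 0 ≤ T)
    (hgper : ∀ t x ε, g (t + T) x ε = g t x ε) {x₀ : ℝ → E} (hx₀ : Continuous x₀)
    (hx₀per : Periodic x₀ T) {z : ℝ → E} {ρ : ℝ}
    (hz : ∀ t, HasDerivAt z ((-ContinuousLinearMap.adjoint (fderiv ℝ f (x₀ t))) (z t)) t)
    (hzF : ∀ t, z (t + T) = ρ • z t) (hρ : ρ ≠ 1) {u : ℝ → ℝ → E} {Δ : ℝ → ℝ} {M : ℝ}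
    (hu : ∀ᶠ ε in 𝓝[>] 0, Periodic (u ε) T ∧ (∀ t, ‖u ε t‖ ≤ M * ε) ∧ ∀ t, HasDerivAt (u ε)
      (f (x₀ t + u ε t) + ε • g (t + Δ ε) (x₀ t + u ε t) ε - f (x₀ t)) t)
    (hΔ : Tendsto Δ (𝓝[>] 0) (𝓝 0)) (a b : ℝ) :
    TendstoUniformlyOn (fun ε t => ε⁻¹ * ⟪z t, u ε t⟫)
      (fun t => ρ / (ρ - 1) * ∫ s in t - T..t, ⟪z s, g s (x₀ s) 0⟫) (𝓝[>] 0) (Icc a b) := by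
  have hzc : Continuous z := continuous_iff_continuousAt.2 fun t => (hz t).continuousAt
  have hψ : ∀ᶠ ε in 𝓝[>] 0, Continuous fun s => ⟪z s, f (x₀ s + u ε s)
      + ε • g (s + Δ ε) (x₀ s + u ε s) ε - f (x₀ s) - fderiv ℝ f (x₀ s) (u ε s)⟫ := by
    filter_upwards [hu] with ε hε
    have huc : Continuous (u ε) :=
      continuous_iff_continuousAt.2 fun t => (hε.2.2 t).continuousAt
    have hgc : Continuous fun s => g (s + Δ ε) (x₀ s + u ε s) ε :=
      hg.comp (by fun_prop : Continuous fun s => (s + Δ ε, x₀ s + u ε s, ε))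
    have := hf.continuous
    have := hf.continuous_fderiv one_ne_zero
    fun_prop
  have hq : Continuous fun s => ⟪z s, g s (x₀ s) 0⟫ :=
    hzc.inner (hg.comp (by fun_prop : Continuous fun s => (s, x₀ s, (0 : ℝ))))
  have hlim := (tendstoUniformlyOn_inv_mul_inner_remainder_add_perturbation hf hg
    (isCompact_Icc (a := a) (b := b + T)) hzc hx₀
    (by filter_upwards [hu] with ε hε s _ using hε.2.1 s) hΔ).intervalIntegral_sliding (I := Icc a b) (T := T)
    (fun t ht => by
      rw [uIcc_of_le (by linarith)]
      exact Icc_subset_Icc ht.1 (by linarith [ht.2]))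
    (by filter_upwards [hψ] with ε hε t _ using (continuous_const.mul hε).intervalIntegrable _ _)
    (fun t _ => hq.intervalIntegrable _ _)
  refine (((uniformContinuous_const_smul (ρ - 1)⁻¹).comp_tendstoUniformlyOn hlim).congr
    ?_).congr_right fun t _ => ?_
  · filter_upwards [hu, hψ] with ε hε hψε t _
    simp only [smul_eq_mul, comp_apply, intervalIntegral.integral_const_mul]
    rw [integral_period_inner_eq_of_adjoint_floquet hz hzF hε.2.2 hε.1 t
      (hψε.intervalIntegrable _ _)]
    field_simp [sub_ne_zero.2 hρ]
  · simp only [smul_eq_mul, comp_apply]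
    rw [integral_add_period_eq_mul_integral_sub_period (q := fun s => ⟪z s, g s (x₀ s) 0⟫)
      (fun s => by rw [hzF, hx₀per, hgper, real_inner_smul_left]) t]
    field_simp [sub_ne_zero.2 hρ]

theorem first_order_asymptotics_general
    (n : ℕ) (f : EuclideanSpace ℝ (Fin n) → EuclideanSpace ℝ (Fin n))
    (g : ℝ → EuclideanSpace ℝ (Fin n) → ℝ → EuclideanSpace ℝ (Fin n))
    (hf : ContDiff ℝ 1 f)
    (hg : Continuous fun p : ℝ × EuclideanSpace ℝ (Fin n) × ℝ => g p.1 p.2.1 p.2.2)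
    (T : ℝ) (hT : 0 < T)
    (hgper : ∀ t x ε, g (t + T) x ε = g t x ε)
    -- x₀ is a nondegenerate T-periodic limit cycle of ẋ = f(x)
    (x₀ : ℝ → EuclideanSpace ℝ (Fin n))
    (hx₀ : ∀ t, HasDerivAt x₀ (f (x₀ t)) t)
    (hx₀per : Function.Periodic x₀ T)
    -- x_ε are T-periodic solutions of the perturbed system with ‖x_ε(·+Δ_ε) − x₀‖ ≤ Mε
    (x : ℝ → ℝ → EuclideanSpace ℝ (Fin n)) (Δ : ℝ → ℝ)
    (M ε₀ : ℝ) (hε₀ : 0 < ε₀)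
    (hx : ∀ ε ∈ Set.Ioc 0 ε₀, ∀ t,
      HasDerivAt (x ε) (f (x ε t) + ε • g t (x ε t) ε) t)
    (hxper : ∀ ε ∈ Set.Ioc 0 ε₀, Function.Periodic (x ε) T)
    (hΔ : Filter.Tendsto Δ (nhdsWithin 0 (Set.Ioi 0)) (nhds 0))
    (hbound : ∀ ε ∈ Set.Ioc 0 ε₀, ∀ t ∈ Set.Icc (0:ℝ) T,
      ‖x ε (t + Δ ε) - x₀ t‖ ≤ M * ε)
    -- z is a not T-periodic Floquet eigenfunction of the adjoint system, multiplier ρ ≠ 1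
    (z : ℝ → EuclideanSpace ℝ (Fin n)) (ρ : ℝ)
    (hz : ∀ t, HasDerivAt z (-(ContinuousLinearMap.adjoint (fderiv ℝ f (x₀ t))) (z t)) t)
    (hzF : ∀ t, z (t + T) = ρ • z t)
    (hρ : ρ ≠ 1) :
    TendstoUniformlyOn
      (fun ε t => (1 / ε) * (inner ℝ (z t) (x ε (t + Δ ε) - x₀ t) : ℝ))
      (fun t => (ρ / (ρ - 1)) * ∫ s in (t - T)..t, (inner ℝ (z s) (g s (x₀ s) 0) : ℝ))
      (nhdsWithin 0 (Set.Ioi 0)) (Set.Icc 0 T) := by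
  set u : ℝ → ℝ → EuclideanSpace ℝ (Fin n) := fun ε t => x ε (t + Δ ε) - x₀ t with hu_def
  have hu : ∀ ε ∈ Ioc 0 ε₀, Periodic (u ε) T ∧ (∀ t, ‖u ε t‖ ≤ M * ε) ∧ ∀ t, HasDerivAt (u ε)
      (f (x₀ t + u ε t) + ε • g (t + Δ ε) (x₀ t + u ε t) ε - f (x₀ t)) t := fun ε hε => by
    have hper : Periodic (u ε) T := fun t => by
      simp only [hu_def, add_right_comm t T, hxper ε hε _, hx₀per t]
    refine ⟨hper, fun t => ?_, fun t => ?_⟩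
    · obtain ⟨s, hs, hts⟩ := hper.exists_mem_Ico₀ hT t
      exact hts ▸ hbound ε hε s (Ico_subset_Icc_self hs)
    · simpa only [hu_def, add_sub_cancel] using
        ((hx ε hε (t + Δ ε)).comp_add_const t (Δ ε)).fun_sub (hx₀ t)
  refine (tendstoUniformlyOn_inv_mul_inner_of_periodic_perturbation hf hg hT.le hgper
    (continuous_iff_continuousAt.2 fun t => (hx₀ t).continuousAt) hx₀per hz hzF hρ
    (by filter_upwards [Ioc_mem_nhdsGT hε₀] with ε hε using hu ε hε) hΔ 0 T).congr ?_
  filter_upwards with ε t _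
  rw [one_div]

/-- Theorem 3.1, first-order asymptotics: under the stated hypotheses,
`(1/ε) ⟨z(t), x_ε(t+Δ_ε) − x₀(t)⟩ → M⊥_z(t) = (ρ/(ρ−1)) ∫_{t−T}^t ⟨z(s), g(s,x₀(s),0)⟩ ds`
as `ε → 0⁺`, uniformly in `t ∈ [0,T]`. -/
theorem first_order_asymptotics
    (n : ℕ) (f : EuclideanSpace ℝ (Fin n) → EuclideanSpace ℝ (Fin n))
    (g : ℝ → EuclideanSpace ℝ (Fin n) → ℝ → EuclideanSpace ℝ (Fin n))
    (hf : ContDiff ℝ 1 f)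
    (hg : Continuous fun p : ℝ × EuclideanSpace ℝ (Fin n) × ℝ => g p.1 p.2.1 p.2.2)
    (T : ℝ) (hT : 0 < T)
    (hgper : ∀ t x ε, g (t + T) x ε = g t x ε)
    -- x₀ is a nondegenerate T-periodic limit cycle of ẋ = f(x)
    (x₀ : ℝ → EuclideanSpace ℝ (Fin n))
    (hx₀ : ∀ t, HasDerivAt x₀ (f (x₀ t)) t)
    (hx₀per : Function.Periodic x₀ T)
    (Y : ℝ → (EuclideanSpace ℝ (Fin n) →L[ℝ] EuclideanSpace ℝ (Fin n)))
    (hY0 : Y 0 = ContinuousLinearMap.id ℝ _)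
    (hY : ∀ t, HasDerivAt Y ((fderiv ℝ f (x₀ t)).comp (Y t)) t)
    (hnondeg : Module.finrank ℝ
      ↥(⨆ k : ℕ, LinearMap.ker
        (((Y T : Module.End ℝ (EuclideanSpace ℝ (Fin n))) - 1) ^ k)) = 1)
    -- x_ε are T-periodic solutions of the perturbed system with ‖x_ε(·+Δ_ε) − x₀‖ ≤ Mε
    (x : ℝ → ℝ → EuclideanSpace ℝ (Fin n)) (Δ : ℝ → ℝ)
    (M ε₀ : ℝ) (hM : 0 < M) (hε₀ : 0 < ε₀)
    (hx : ∀ ε ∈ Set.Ioc 0 ε₀, ∀ t,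
      HasDerivAt (x ε) (f (x ε t) + ε • g t (x ε t) ε) t)
    (hxper : ∀ ε ∈ Set.Ioc 0 ε₀, Function.Periodic (x ε) T)
    (hΔ : Filter.Tendsto Δ (nhdsWithin 0 (Set.Ioi 0)) (nhds 0))
    (hbound : ∀ ε ∈ Set.Ioc 0 ε₀, ∀ t ∈ Set.Icc (0:ℝ) T,
      ‖x ε (t + Δ ε) - x₀ t‖ ≤ M * ε)
    -- z is a not T-periodic Floquet eigenfunction of the adjoint system, multiplier ρ ≠ 1
    (z : ℝ → EuclideanSpace ℝ (Fin n)) (ρ : ℝ)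
    (hz : ∀ t, HasDerivAt z (-(ContinuousLinearMap.adjoint (fderiv ℝ f (x₀ t))) (z t)) t)
    (hzF : ∀ t, z (t + T) = ρ • z t)
    (hρ : ρ ≠ 1) (hz0 : z ≠ 0) :
    TendstoUniformlyOn
      (fun ε t => (1 / ε) * (inner ℝ (z t) (x ε (t + Δ ε) - x₀ t) : ℝ))
      (fun t => (ρ / (ρ - 1)) * ∫ s in (t - T)..t, (inner ℝ (z s) (g s (x₀ s) 0) : ℝ))
      (nhdsWithin 0 (Set.Ioi 0)) (Set.Icc 0 T) :=
  first_order_asymptotics_general n f g hf hg T hT hgper x₀ hx₀ hx₀per x Δ M ε₀ hε₀ hx hxper hΔ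
    hbound z ρ hz hzF hρ
end

section
/- (Corollary 3.3, sign of the angle.) Under the hypotheses of Theorem 3.1, for any not-T-periodic Floquet eigenfunction z of the adjoint system and any t ∈ [0,T]: if M⊥_z(t) > 0 then cos∠(z(t), x_ε(t+Δ_ε) − x₀(t)) > 0 for all sufficiently small ε > 0, and if M⊥_z(t) < 0 then cos∠(z(t), x_ε(t+Δ_ε) − x₀(t)) < 0 for all sufficiently small ε > 0. -/
/-!
Put `y = x_ε(· + Δ_ε)` and `φ(s) = ⟪z(s), y(s) - x₀(s)⟫`. Because `z` solves the adjoint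
variational equation, the linear part of `f(y) - f(x₀)` cancels in `φ'`, leaving
`φ' = ε ⟪z, g⟫ + ⟪z, f(y) - f(x₀) - Df(x₀)(y - x₀)⟫`; and `φ(t) = ρ φ(t - T)` by periodicity
of `y - x₀`. Integrating `φ'` over a period therefore gives
`φ(t) / ε = ρ / (ρ - 1) ∫_{t-T}^t (⟪z, g⟫ + ε⁻¹ ⟪z, f(y) - f(x₀) - Df(x₀)(y - x₀)⟫)`.
Since `y - x₀ = O(ε)` uniformly, the Taylor remainder divided by `ε` is bounded and tends to `0`, so
by dominated convergence `φ(t) / ε → M⊥_z(t)`, and `φ(t)`, hence the cosine, eventually has the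
sign of `M⊥_z(t)`.
-/

open intervalIntegral Filter Set Metric Topology

section Remainder

variable {E F : Type*} [NormedAddCommGroup E] [NormedSpace ℝ E]
  [NormedAddCommGroup F] [NormedSpace ℝ F]

noncomputable def firstOrderRemainder (f : E → F) (a b : E) : F :=
  f b - f a - fderiv ℝ f a (b - a)

theorem continuous_firstOrderRemainder {f : E → F} (hf : ContDiff ℝ 1 f) {a b : ℝ → E}
    (ha : Continuous a) (hb : Continuous b) :
    Continuous fun s => firstOrderRemainder f (a s) (b s) := by
  have hf' := hf.continuous_fderiv one_ne_zero
  have hfc := hf.continuous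
  unfold firstOrderRemainder
  fun_prop

theorem IsCompact.exists_norm_firstOrderRemainder_le {f : E → F} (hf : ContDiff ℝ 1 f)
    {K : Set E} (hK : IsCompact K) (hKc : Convex ℝ K) :
    ∃ C ≥ 0, ∀ a ∈ K, ∀ b ∈ K, ‖firstOrderRemainder f a b‖ ≤ C * ‖b - a‖ := by
  obtain ⟨C, hC⟩ := hK.exists_bound_of_continuousOn
    (hf.continuous_fderiv one_ne_zero).continuousOn
  refine ⟨2 * max C 0, by positivity, fun a ha b hb => ?_⟩
  refine hKc.norm_image_sub_le_of_norm_hasFDerivWithin_le'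
    (fun v _ => ((hf.differentiable one_ne_zero) v).hasFDerivAt.hasFDerivWithinAt)
    (fun v hv => ?_) ha hb
  calc ‖fderiv ℝ f v - fderiv ℝ f a‖ ≤ ‖fderiv ℝ f v‖ + ‖fderiv ℝ f a‖ := norm_sub_le _ _
    _ ≤ 2 * max C 0 := by linarith [hC v hv, hC a ha, le_max_left C 0]

theorem tendsto_inv_smul_firstOrderRemainder {f : E → F} {a : E} (hf : DifferentiableAt ℝ f a)
    {l : Filter ℝ} {y : ℝ → E} (hy : Tendsto y l (𝓝 a))
    (hO : (fun ε => y ε - a) =O[l] fun ε => ε) :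
    Tendsto (fun ε => ε⁻¹ • firstOrderRemainder f a (y ε)) l (𝓝 0) :=
  ((hf.hasFDerivAt.isLittleO.comp_tendsto hy).trans_isBigO hO).tendsto_inv_smul_nhds_zero

theorem tendsto_perturbed_field {f : E → F} {g : ℝ → E → ℝ → F} {p : E} {s M : ℝ}
    (hf : DifferentiableAt ℝ f p)
    (hg : ContinuousAt (fun q : ℝ × E × ℝ => g q.1 q.2.1 q.2.2) (s, p, 0))
    {y : ℝ → E} {Δ : ℝ → ℝ} (hΔ : Tendsto Δ (𝓝[>] 0) (𝓝 0))
    (hy : ∀ᶠ ε in 𝓝[>] 0, ‖y ε - p‖ ≤ M * ε) :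
    Tendsto (fun ε => g (s + Δ ε) (y ε) ε + ε⁻¹ • firstOrderRemainder f p (y ε)) (𝓝[>] 0)
      (𝓝 (g s p 0)) := by
  have hε : Tendsto (fun ε : ℝ => ε) (𝓝[>] 0) (𝓝 0) :=
    tendsto_nhdsWithin_of_tendsto_nhds tendsto_id
  have hO : (fun ε => y ε - p) =O[𝓝[>] 0] fun ε => ε := by
    refine Asymptotics.IsBigO.of_bound M ?_
    filter_upwards [hy, self_mem_nhdsWithin] with ε hyε (hε : 0 < ε)
    rwa [Real.norm_eq_abs, abs_of_pos hε]
  have hyp : Tendsto y (𝓝[>] 0) (𝓝 p) := by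
    simpa using (hO.trans_tendsto hε).add_const p
  have hs : Tendsto (fun ε => s + Δ ε) (𝓝[>] 0) (𝓝 s) := by
    simpa using hΔ.const_add s
  have hgq := hg.tendsto.comp (hs.prodMk_nhds (hyp.prodMk_nhds hε))
  simpa using hgq.add (tendsto_inv_smul_firstOrderRemainder hf hyp hO)

theorem exists_norm_perturbed_field_le [ProperSpace E] {f : E → F} (hf : ContDiff ℝ 1 f)
    {g : ℝ → E → ℝ → F} (hg : Continuous fun q : ℝ × E × ℝ => g q.1 q.2.1 q.2.2)
    {x₀ : ℝ → E} (hx₀ : Continuous x₀)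
    (a b M : ℝ) :
    ∃ C, ∀ ε ∈ Ioc (0 : ℝ) 1, ∀ δ ∈ Icc (-1 : ℝ) 1, ∀ s ∈ uIcc a b, ∀ v, ‖v - x₀ s‖ ≤ M * ε →
      ‖g (s + δ) v ε + ε⁻¹ • firstOrderRemainder f (x₀ s) v‖ ≤ C := by
  obtain ⟨Cx, hCx⟩ := isCompact_uIcc.exists_bound_of_continuousOn hx₀.continuousOn
  set K : Set E := closedBall 0 (Cx + |M|)
  obtain ⟨Cg, hCg⟩ := ((isCompact_Icc (a := a ⊓ b - 1) (b := a ⊔ b + 1)).prod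
    ((isCompact_closedBall (0 : E) (Cx + |M|)).prod (isCompact_Icc (a := (0 : ℝ)) (b := 1)))
    ).exists_bound_of_continuousOn hg.continuousOn
  obtain ⟨C₁, hC₁, hR⟩ :=
    (isCompact_closedBall (0 : E) (Cx + |M|)).exists_norm_firstOrderRemainder_le hf
      (convex_closedBall 0 _)
  refine ⟨Cg + C₁ * M, fun ε hε δ hδ s hs v hv => ?_⟩
  have hMε : M * ε ≤ |M| := by
    nlinarith [le_abs_self M, abs_nonneg M, hε.1, hε.2]
  have mem_K : ∀ w, ‖w - x₀ s‖ ≤ M * ε → w ∈ K := fun w hw => by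
    rw [mem_closedBall_zero_iff]
    calc ‖w‖ ≤ ‖x₀ s‖ + ‖w - x₀ s‖ := norm_le_norm_add_norm_sub' w (x₀ s)
      _ ≤ Cx + |M| := add_le_add (hCx s hs) (hw.trans hMε)
  have hx₀K : x₀ s ∈ K := mem_K _ (by simpa using (norm_nonneg (v - x₀ s)).trans hv)
  have hg_le : ‖g (s + δ) v ε‖ ≤ Cg := by
    refine hCg (s + δ, v, ε) ⟨⟨?_, ?_⟩, mem_K v hv, hε.1.le, hε.2⟩
    · linarith [hs.1, hδ.1]
    · linarith [hs.2, hδ.2]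
  have hR_le : ‖ε⁻¹ • firstOrderRemainder f (x₀ s) v‖ ≤ C₁ * M := by
    rw [norm_smul, norm_inv, Real.norm_eq_abs, abs_of_pos hε.1, inv_mul_le_iff₀ hε.1]
    calc ‖firstOrderRemainder f (x₀ s) v‖ ≤ C₁ * ‖v - x₀ s‖ := hR _ hx₀K _ (mem_K v hv)
      _ ≤ C₁ * (M * ε) := mul_le_mul_of_nonneg_left hv hC₁
      _ = ε * (C₁ * M) := by ring
  exact (norm_add_le _ _).trans (add_le_add hg_le hR_le)

end Remainder

theorem Function.Periodic.le_of_forall_mem_Icc {u : ℝ → ℝ} {T C : ℝ}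
    (hu : Function.Periodic u T) (hT : 0 < T) (h : ∀ s ∈ Icc 0 T, u s ≤ C) (s : ℝ) : u s ≤ C := by
  obtain ⟨s', hs', hss'⟩ := hu.exists_mem_Ico₀ hT s
  exact hss' ▸ h s' (Ico_subset_Icc_self hs')

theorem eq_div_sub_one_mul_integral_of_eq_mul {φ φ' : ℝ → ℝ} {ρ a b : ℝ} (hρ : ρ ≠ 1)
    (hφ : ∀ s ∈ uIcc a b, HasDerivAt φ (φ' s) s)
    (hφ' : IntervalIntegrable φ' MeasureTheory.volume a b)
    (hab : φ b = ρ * φ a) :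
    φ b = ρ / (ρ - 1) * ∫ s in a..b, φ' s := by
  have hρ1 : ρ - 1 ≠ 0 := sub_ne_zero.2 hρ
  rw [integral_eq_sub_of_hasDerivAt hφ hφ', hab]
  field_simp

section InnerProduct

variable {E : Type*} [NormedAddCommGroup E] [InnerProductSpace ℝ E]

theorem hasDerivAt_inner_of_adjoint [CompleteSpace E] {A : E →L[ℝ] E} {z u : ℝ → E} {u' : E}
    {s : ℝ}
    (hz : HasDerivAt z (-(ContinuousLinearMap.adjoint A) (z s)) s) (hu : HasDerivAt u u' s) :
    HasDerivAt (fun s => (inner ℝ (z s) (u s) : ℝ)) (inner ℝ (z s) (u' - A (u s))) s := by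
  refine (hz.inner ℝ hu).congr_deriv ?_
  simp only [inner_neg_left, ContinuousLinearMap.adjoint_inner_left, inner_sub_right]
  ring

theorem inner_div_eq_mul_integral_of_floquet [CompleteSpace E] {f : E → E} (hf : ContDiff ℝ 1 f)
    {x₀ y z G : ℝ → E} {ρ ε T : ℝ} (hε : ε ≠ 0) (hρ : ρ ≠ 1)
    (hx₀ : ∀ s, HasDerivAt x₀ (f (x₀ s)) s) (hx₀per : Function.Periodic x₀ T)
    (hy : ∀ s, HasDerivAt y (f (y s) + ε • G s) s) (hyper : Function.Periodic y T)
    (hG : Continuous G)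
    (hz : ∀ s, HasDerivAt z (-(ContinuousLinearMap.adjoint (fderiv ℝ f (x₀ s))) (z s)) s)
    (hzF : ∀ s, z (s + T) = ρ • z s) (t : ℝ) :
    inner ℝ (z t) (y t - x₀ t) / ε = ρ / (ρ - 1) *
      ∫ s in (t - T)..t, inner ℝ (z s) (G s + ε⁻¹ • firstOrderRemainder f (x₀ s) (y s)) := by
  set F := fun s => inner ℝ (z s) (G s + ε⁻¹ • firstOrderRemainder f (x₀ s) (y s))
  have hderiv : ∀ s, HasDerivAt (fun s => inner ℝ (z s) (y s - x₀ s)) (ε * F s) s := fun s =>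
    (hasDerivAt_inner_of_adjoint (hz s) ((hy s).sub (hx₀ s))).congr_deriv <| by
      rw [← real_inner_smul_right, smul_add, smul_inv_smul₀ hε, firstOrderRemainder]
      congr 1
      abel
  have hFc : Continuous F :=
    (continuous_iff_continuousAt.2 fun s => (hz s).continuousAt).inner
      (hG.add ((continuous_firstOrderRemainder hf
        (continuous_iff_continuousAt.2 fun s => (hx₀ s).continuousAt)
        (continuous_iff_continuousAt.2 fun s => (hy s).continuousAt)).const_smul _))
  have hmul :
      inner ℝ (z t) (y t - x₀ t) = ρ * inner ℝ (z (t - T)) (y (t - T) - x₀ (t - T)) := by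
    rw [hyper.sub_eq, hx₀per.sub_eq, ← real_inner_smul_left, ← hzF, sub_add_cancel]
  rw [eq_div_sub_one_mul_integral_of_eq_mul hρ (fun s _ => hderiv s)
    ((continuous_const.mul hFc).intervalIntegrable _ _) hmul, integral_const_mul]
  field_simp

theorem tendsto_integral_inner_perturbed_field [ProperSpace E] {f : E → E} (hf : ContDiff ℝ 1 f)
    {g : ℝ → E → ℝ → E} (hg : Continuous fun q : ℝ × E × ℝ => g q.1 q.2.1 q.2.2)
    {x₀ z : ℝ → E} (hx₀ : Continuous x₀) (hz : Continuous z) {y : ℝ → ℝ → E} {Δ : ℝ → ℝ}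
    {M a b : ℝ} (hy : ∀ᶠ ε in 𝓝[>] 0, Continuous (y ε)) (hΔ : Tendsto Δ (𝓝[>] 0) (𝓝 0))
    (hyx₀ : ∀ᶠ ε in 𝓝[>] 0, ∀ s ∈ uIcc a b, ‖y ε s - x₀ s‖ ≤ M * ε) :
    Tendsto (fun ε => ∫ s in a..b,
        inner ℝ (z s) (g (s + Δ ε) (y ε s) ε + ε⁻¹ • firstOrderRemainder f (x₀ s) (y ε s)))
      (𝓝[>] 0) (𝓝 (∫ s in a..b, inner ℝ (z s) (g s (x₀ s) 0))) := by
  obtain ⟨C, hC⟩ := exists_norm_perturbed_field_le hf hg hx₀ a b M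
  obtain ⟨Cz, hCz⟩ := isCompact_uIcc.exists_bound_of_continuousOn hz.continuousOn
  have hsmall : ∀ᶠ ε in 𝓝[>] (0 : ℝ), ε ∈ Ioc 0 1 := Ioc_mem_nhdsGT zero_lt_one
  have hΔsmall : ∀ᶠ ε in 𝓝[>] (0 : ℝ), Δ ε ∈ Icc (-1) 1 :=
    hΔ (Icc_mem_nhds (by norm_num) (by norm_num))
  refine tendsto_integral_filter_of_dominated_convergence (fun _ => Cz * C) ?_ ?_
    intervalIntegrable_const (.of_forall fun s hs => ?_)
  · filter_upwards [hy] with ε hyε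
    have hgε : Continuous fun s => g (s + Δ ε) (y ε s) ε :=
      hg.comp (f := fun s => (s + Δ ε, y ε s, ε)) (by fun_prop)
    exact (hz.inner (𝕜 := ℝ) (hgε.add ((continuous_firstOrderRemainder hf hx₀ hyε).const_smul _))
      ).aestronglyMeasurable
  · filter_upwards [hyx₀, hsmall, hΔsmall] with ε hyε hε hΔε
    refine .of_forall fun s hs => ?_
    have hs' : s ∈ uIcc a b := uIoc_subset_uIcc hs
    rw [Real.norm_eq_abs]
    exact (abs_real_inner_le_norm _ _).trans (mul_le_mul (hCz s hs')
      (hC ε hε _ hΔε s hs' _ (hyε s hs')) (norm_nonneg _) ((norm_nonneg _).trans (hCz s hs')))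
  · have hyx₀s : ∀ᶠ ε in 𝓝[>] 0, ‖y ε s - x₀ s‖ ≤ M * ε := by
      filter_upwards [hyx₀] with ε hε using hε s (uIoc_subset_uIcc hs)
    exact tendsto_const_nhds.inner (𝕜 := ℝ) (tendsto_perturbed_field
      ((hf.differentiable one_ne_zero) _) hg.continuousAt hΔ hyx₀s)

theorem real_inner_div_norm_mul_norm_pos {a b : E} (h : 0 < inner ℝ a b) :
    0 < inner ℝ a b / (‖a‖ * ‖b‖) :=
  div_pos h (h.trans_le (real_inner_le_norm a b))

theorem real_inner_div_norm_mul_norm_neg {a b : E} (h : inner ℝ a b < 0) :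
    inner ℝ a b / (‖a‖ * ‖b‖) < 0 := by
  have hneg : -inner ℝ a b ≤ ‖a‖ * ‖b‖ := by
    simpa [inner_neg_left] using real_inner_le_norm (-a) b
  exact div_neg_of_neg_of_pos h (by linarith)

end InnerProduct

theorem exists_forall_Ioc_pos_of_tendsto_div {φ : ℝ → ℝ} {L : ℝ}
    (h : Tendsto (fun ε => φ ε / ε) (𝓝[>] 0) (𝓝 L)) (hL : 0 < L) :
    ∃ ε₁ > 0, ∀ ε ∈ Ioc 0 ε₁, 0 < φ ε := by
  obtain ⟨ε₁, hε₁, hsub⟩ := mem_nhdsGT_iff_exists_Ioc_subset.1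
    ((h.eventually (eventually_gt_nhds hL)).and self_mem_nhdsWithin)
  exact ⟨ε₁, hε₁, fun ε hε => (div_pos_iff_of_pos_right (hsub hε).2).1 (hsub hε).1⟩

theorem exists_forall_Ioc_neg_of_tendsto_div {φ : ℝ → ℝ} {L : ℝ}
    (h : Tendsto (fun ε => φ ε / ε) (𝓝[>] 0) (𝓝 L)) (hL : L < 0) :
    ∃ ε₁ > 0, ∀ ε ∈ Ioc 0 ε₁, φ ε < 0 := by
  obtain ⟨ε₁, hε₁, hpos⟩ := exists_forall_Ioc_pos_of_tendsto_div (φ := fun ε => -φ ε)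
    (by simpa only [neg_div] using h.neg) (neg_pos.2 hL)
  exact ⟨ε₁, hε₁, fun ε hε => neg_pos.1 (hpos ε hε)⟩

theorem sign_of_angle_general
    (n : ℕ) (f : EuclideanSpace ℝ (Fin n) → EuclideanSpace ℝ (Fin n))
    (g : ℝ → EuclideanSpace ℝ (Fin n) → ℝ → EuclideanSpace ℝ (Fin n))
    (hf : ContDiff ℝ 1 f)
    (hg : Continuous fun p : ℝ × EuclideanSpace ℝ (Fin n) × ℝ => g p.1 p.2.1 p.2.2)
    (T : ℝ) (hT : 0 < T)
    -- x₀ is a nondegenerate T-periodic limit cycle of ẋ = f(x)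
    (x₀ : ℝ → EuclideanSpace ℝ (Fin n))
    (hx₀ : ∀ t, HasDerivAt x₀ (f (x₀ t)) t)
    (hx₀per : Function.Periodic x₀ T)
    -- x_ε are T-periodic solutions of the perturbed system with ‖x_ε(·+Δ_ε) − x₀‖ ≤ Mε
    (x : ℝ → ℝ → EuclideanSpace ℝ (Fin n)) (Δ : ℝ → ℝ)
    (M ε₀ : ℝ) (hε₀ : 0 < ε₀)
    (hx : ∀ ε ∈ Set.Ioc 0 ε₀, ∀ t,
      HasDerivAt (x ε) (f (x ε t) + ε • g t (x ε t) ε) t)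
    (hxper : ∀ ε ∈ Set.Ioc 0 ε₀, Function.Periodic (x ε) T)
    (hΔ : Filter.Tendsto Δ (nhdsWithin 0 (Set.Ioi 0)) (nhds 0))
    (hbound : ∀ ε ∈ Set.Ioc 0 ε₀, ∀ t ∈ Set.Icc (0:ℝ) T,
      ‖x ε (t + Δ ε) - x₀ t‖ ≤ M * ε)
    -- z is a not T-periodic Floquet eigenfunction of the adjoint system, multiplier ρ ≠ 1
    (z : ℝ → EuclideanSpace ℝ (Fin n)) (ρ : ℝ)
    (hz : ∀ t, HasDerivAt z (-(ContinuousLinearMap.adjoint (fderiv ℝ f (x₀ t))) (z t)) t)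
    (hzF : ∀ t, z (t + T) = ρ • z t)
    (hρ : ρ ≠ 1)
    (t : ℝ) :
    (((ρ / (ρ - 1)) * ∫ s in (t - T)..t, (inner ℝ (z s) (g s (x₀ s) 0) : ℝ)) > 0 →
      ∃ ε₁ > 0, ∀ ε ∈ Set.Ioc 0 ε₁,
        (inner ℝ (z t) (x ε (t + Δ ε) - x₀ t) : ℝ) /
          (‖z t‖ * ‖x ε (t + Δ ε) - x₀ t‖) > 0) ∧
    (((ρ / (ρ - 1)) * ∫ s in (t - T)..t, (inner ℝ (z s) (g s (x₀ s) 0) : ℝ)) < 0 →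
      ∃ ε₁ > 0, ∀ ε ∈ Set.Ioc 0 ε₁,
        (inner ℝ (z t) (x ε (t + Δ ε) - x₀ t) : ℝ) /
          (‖z t‖ * ‖x ε (t + Δ ε) - x₀ t‖) < 0) := by
  have hsmall : ∀ᶠ ε in 𝓝[>] 0, ε ∈ Ioc 0 ε₀ := Ioc_mem_nhdsGT hε₀
  have hclose : ∀ ε ∈ Ioc 0 ε₀, ∀ s, ‖x ε (s + Δ ε) - x₀ s‖ ≤ M * ε := fun ε hε =>
    ((((hxper ε hε).add_const (Δ ε)).sub hx₀per).comp norm).le_of_forall_mem_Icc hT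
      (hbound ε hε)
  have hy : ∀ ε ∈ Ioc 0 ε₀, ∀ s, HasDerivAt (fun s => x ε (s + Δ ε))
      (f (x ε (s + Δ ε)) + ε • g (s + Δ ε) (x ε (s + Δ ε)) ε) s :=
    fun ε hε s => (hx ε hε _).comp_add_const s (Δ ε)
  have hyc : ∀ ε ∈ Ioc 0 ε₀, Continuous fun s => x ε (s + Δ ε) :=
    fun ε hε => continuous_iff_continuousAt.2 fun s => (hy ε hε s).continuousAt
  have hlim : Tendsto (fun ε => inner ℝ (z t) (x ε (t + Δ ε) - x₀ t) / ε) (𝓝[>] 0)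
      (𝓝 (ρ / (ρ - 1) * ∫ s in (t - T)..t, inner ℝ (z s) (g s (x₀ s) 0))) := by
    refine ((tendsto_integral_inner_perturbed_field (y := fun ε s => x ε (s + Δ ε)) (M := M) hf hg
      (continuous_iff_continuousAt.2 fun s => (hx₀ s).continuousAt)
      (continuous_iff_continuousAt.2 fun s => (hz s).continuousAt) (hsmall.mono hyc) hΔ
      (hsmall.mono fun ε hε s _ => hclose ε hε s)).const_mul _).congr' ?_
    filter_upwards [hsmall] with ε hε
    have hgε : Continuous fun s => g (s + Δ ε) (x ε (s + Δ ε)) ε :=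
      hg.comp (f := fun s => (s + Δ ε, x ε (s + Δ ε), ε))
        ((continuous_id.add continuous_const).prodMk ((hyc ε hε).prodMk continuous_const))
    exact (inner_div_eq_mul_integral_of_floquet hf hε.1.ne' hρ hx₀ hx₀per (hy ε hε)
      ((hxper ε hε).add_const _) hgε hz hzF t).symm
  refine ⟨fun hpos => ?_, fun hneg => ?_⟩
  · obtain ⟨ε₁, hε₁, h⟩ := exists_forall_Ioc_pos_of_tendsto_div hlim hpos
    exact ⟨ε₁, hε₁, fun ε hε => real_inner_div_norm_mul_norm_pos (h ε hε)⟩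
  · obtain ⟨ε₁, hε₁, h⟩ := exists_forall_Ioc_neg_of_tendsto_div hlim hneg
    exact ⟨ε₁, hε₁, fun ε hε => real_inner_div_norm_mul_norm_neg (h ε hε)⟩

/-- Corollary 3.3, sign of the angle: under the hypotheses of Theorem 3.1,
for any not-`T`-periodic Floquet eigenfunction `z` and `t ∈ [0,T]`: if `M⊥_z(t) > 0` then
`cos∠(z(t), x_ε(t+Δ_ε) − x₀(t)) > 0` for all small `ε > 0`, and if `M⊥_z(t) < 0` then the
cosine is negative for all small `ε > 0`. -/
theorem sign_of_angle
    (n : ℕ) (f : EuclideanSpace ℝ (Fin n) → EuclideanSpace ℝ (Fin n))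
    (g : ℝ → EuclideanSpace ℝ (Fin n) → ℝ → EuclideanSpace ℝ (Fin n))
    (hf : ContDiff ℝ 1 f)
    (hg : Continuous fun p : ℝ × EuclideanSpace ℝ (Fin n) × ℝ => g p.1 p.2.1 p.2.2)
    (T : ℝ) (hT : 0 < T)
    (hgper : ∀ t x ε, g (t + T) x ε = g t x ε)
    -- x₀ is a nondegenerate T-periodic limit cycle of ẋ = f(x)
    (x₀ : ℝ → EuclideanSpace ℝ (Fin n))
    (hx₀ : ∀ t, HasDerivAt x₀ (f (x₀ t)) t)
    (hx₀per : Function.Periodic x₀ T)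
    (Y : ℝ → (EuclideanSpace ℝ (Fin n) →L[ℝ] EuclideanSpace ℝ (Fin n)))
    (hY0 : Y 0 = ContinuousLinearMap.id ℝ _)
    (hY : ∀ t, HasDerivAt Y ((fderiv ℝ f (x₀ t)).comp (Y t)) t)
    (hnondeg : Module.finrank ℝ
      ↥(⨆ k : ℕ, LinearMap.ker
        (((Y T : Module.End ℝ (EuclideanSpace ℝ (Fin n))) - 1) ^ k)) = 1)
    -- x_ε are T-periodic solutions of the perturbed system with ‖x_ε(·+Δ_ε) − x₀‖ ≤ Mε
    (x : ℝ → ℝ → EuclideanSpace ℝ (Fin n)) (Δ : ℝ → ℝ)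
    (M ε₀ : ℝ) (hM : 0 < M) (hε₀ : 0 < ε₀)
    (hx : ∀ ε ∈ Set.Ioc 0 ε₀, ∀ t,
      HasDerivAt (x ε) (f (x ε t) + ε • g t (x ε t) ε) t)
    (hxper : ∀ ε ∈ Set.Ioc 0 ε₀, Function.Periodic (x ε) T)
    (hΔ : Filter.Tendsto Δ (nhdsWithin 0 (Set.Ioi 0)) (nhds 0))
    (hbound : ∀ ε ∈ Set.Ioc 0 ε₀, ∀ t ∈ Set.Icc (0:ℝ) T,
      ‖x ε (t + Δ ε) - x₀ t‖ ≤ M * ε)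
    -- z is a not T-periodic Floquet eigenfunction of the adjoint system, multiplier ρ ≠ 1
    (z : ℝ → EuclideanSpace ℝ (Fin n)) (ρ : ℝ)
    (hz : ∀ t, HasDerivAt z (-(ContinuousLinearMap.adjoint (fderiv ℝ f (x₀ t))) (z t)) t)
    (hzF : ∀ t, z (t + T) = ρ • z t)
    (hρ : ρ ≠ 1) (hz0 : z ≠ 0)
    (t : ℝ) (ht : t ∈ Set.Icc (0:ℝ) T) :
    (((ρ / (ρ - 1)) * ∫ s in (t - T)..t, (inner ℝ (z s) (g s (x₀ s) 0) : ℝ)) > 0 →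
      ∃ ε₁ > 0, ∀ ε ∈ Set.Ioc 0 ε₁,
        (inner ℝ (z t) (x ε (t + Δ ε) - x₀ t) : ℝ) /
          (‖z t‖ * ‖x ε (t + Δ ε) - x₀ t‖) > 0) ∧
    (((ρ / (ρ - 1)) * ∫ s in (t - T)..t, (inner ℝ (z s) (g s (x₀ s) 0) : ℝ)) < 0 →
      ∃ ε₁ > 0, ∀ ε ∈ Set.Ioc 0 ε₁,
        (inner ℝ (z t) (x ε (t + Δ ε) - x₀ t) : ℝ) /
          (‖z t‖ * ‖x ε (t + Δ ε) - x₀ t‖) < 0) :=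
  sign_of_angle_general n f g hf hg T hT x₀ hx₀ hx₀per x Δ M ε₀ hε₀ hx hxper hΔ hbound z ρ hz hzF hρ
    t
end

section
/- (Corollary 3.4, two-sided estimate.) Under the hypotheses of Theorem 3.1, if there exists a not-T-periodic Floquet eigenfunction z of the adjoint system such that M⊥_z(t) ≠ 0 for every t ∈ [0,T], then there exist constants 0 < c₁ ≤ c₂ such that c₁ ε ≤ ‖x_ε(t+Δ_ε) − x₀(t)‖ ≤ c₂ ε for all t ∈ [0,T] and all sufficiently small ε > 0. -/
/-!
Pair the displacement `u_ε(t) = x_ε(t + Δ_ε) - x₀(t)` with the adjoint Floquet solution `z`.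
Because `z` solves the adjoint variational equation,
`d/dt ⟪z, u_ε⟫ = ⟪z, f(x₀ + u_ε) - f(x₀) - Df(x₀) u_ε + ε g⟫`, and the Floquet relation
`z(t + T) = ρ z(t)` together with the `T`-periodicity of `u_ε` turns this into
`⟪z(t), u_ε(t)⟫ = ρ/(ρ-1) ∫_{t-T}^t ⟪z, …⟫`. The integrand is `ε ⟪z, g(·, x₀, 0)⟫ + o(ε)`
uniformly, so `⟪z(t), u_ε(t)⟫ = ε M⊥_z(t) + o(ε)`; since `|M⊥_z|` is bounded below on `[0, T]`,
Cauchy–Schwarz gives the lower bound, and the upper bound is the a priori estimate `‖u_ε‖ ≤ M ε`.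
-/
open Set Filter Topology intervalIntegral
open scoped InnerProductSpace Interval

theorem IsCompact.exists_forall_dist_lt_of_continuousAt {α β : Type*} [PseudoMetricSpace α]
    [PseudoMetricSpace β] {K : Set α} (hK : IsCompact K) {f : α → β}
    (hf : ∀ a ∈ K, ContinuousAt f a) {η : ℝ} (hη : 0 < η) :
    ∃ δ > 0, ∀ a ∈ K, ∀ b, dist a b < δ → dist (f a) (f b) < η := by
  obtain ⟨δ, hδ, h⟩ := Metric.mem_uniformity_dist.mp
    (hK.uniformContinuousAt_of_continuousAt f hf (Metric.dist_mem_uniformity hη))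
  exact ⟨δ, hδ, fun a ha b hab => h hab ha⟩

theorem IsCompact.exists_norm_sub_sub_fderiv_le {E F : Type*} [NormedAddCommGroup E]
    [NormedSpace ℝ E] [NormedAddCommGroup F] [NormedSpace ℝ F] {f : E → F}
    (hf : ContDiff ℝ 1 f) {K : Set E} (hK : IsCompact K) {η : ℝ} (hη : 0 < η) :
    ∃ δ > 0, ∀ a ∈ K, ∀ v, ‖v‖ < δ →
      ‖f (a + v) - f a - fderiv ℝ f a v‖ ≤ η * ‖v‖ := by
  obtain ⟨δ, hδ, hDf⟩ := hK.exists_forall_dist_lt_of_continuousAt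
    (fun a _ => (hf.continuous_fderiv one_ne_zero).continuousAt) hη
  refine ⟨δ, hδ, fun a ha v hv => ?_⟩
  have hderiv : ∀ y ∈ segment ℝ a (a + v),
      HasFDerivWithinAt (fun y => f y - fderiv ℝ f a y) (fderiv ℝ f y - fderiv ℝ f a)
        (segment ℝ a (a + v)) y := fun y _ =>
    (((hf.differentiable one_ne_zero) y).hasFDerivAt.sub
      (fderiv ℝ f a).hasFDerivAt).hasFDerivWithinAt
  have hbound : ∀ y ∈ segment ℝ a (a + v), ‖fderiv ℝ f y - fderiv ℝ f a‖ ≤ η := by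
    intro y hy
    have hya : dist a y < δ := by
      have := (convex_closedBall a ‖v‖).segment_subset (Metric.mem_closedBall_self (norm_nonneg v))
        (by simp) hy
      rw [Metric.mem_closedBall] at this
      rw [dist_comm]; exact this.trans_lt hv
    rw [← dist_eq_norm, dist_comm]
    exact (hDf a ha y hya).le
  have hmvt := (convex_segment a (a + v)).norm_image_sub_le_of_norm_hasFDerivWithin_le hderiv hbound
    (left_mem_segment ℝ _ _) (right_mem_segment ℝ _ _)
  have hrearrange : f (a + v) - fderiv ℝ f a (a + v) - (f a - fderiv ℝ f a a)
      = f (a + v) - f a - fderiv ℝ f a v := by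
    rw [map_add]; abel
  rwa [hrearrange, add_sub_cancel_left] at hmvt

theorem IsCompact.exists_pos_forall_le_abs {α : Type*} [TopologicalSpace α] {K : Set α}
    (hK : IsCompact K) {F : α → ℝ} (hF : ContinuousOn F K) (hF0 : ∀ t ∈ K, F t ≠ 0) :
    ∃ m > 0, ∀ t ∈ K, m ≤ |F t| := by
  rcases K.eq_empty_or_nonempty with rfl | hne
  · exact ⟨1, one_pos, by simp⟩
  obtain ⟨t₀, ht₀, hmin⟩ := hK.exists_isMinOn hne hF.abs
  exact ⟨|F t₀|, abs_pos.mpr (hF0 t₀ ht₀), fun t ht => hmin ht⟩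

theorem Function.Periodic.norm_le_of_forall_mem_Icc {E : Type*} [SeminormedAddGroup E]
    {F : ℝ → E} {T C : ℝ} (hF : Function.Periodic F T) (hT : 0 < T)
    (hC : ∀ t ∈ Icc 0 T, ‖F t‖ ≤ C) (t : ℝ) : ‖F t‖ ≤ C := by
  obtain ⟨s, hs, hts⟩ := hF.exists_mem_Ico₀ hT t
  rw [hts]
  exact hC s (Ico_subset_Icc_self hs)

theorem Continuous.continuous_intervalIntegral_sub_const {h : ℝ → ℝ} (hh : Continuous h)
    (T : ℝ) : Continuous fun t => ∫ s in (t - T)..t, h s := by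
  have hprim := continuous_primitive (μ := MeasureTheory.volume)
    (fun a b => hh.intervalIntegrable a b) 0
  refine ((hprim.sub (hprim.comp (continuous_sub_right T)))).congr fun t => ?_
  exact integral_interval_sub_left (hh.intervalIntegrable _ _) (hh.intervalIntegrable _ _)

theorem HasDerivAt.inner_of_hasDerivAt_adjoint {E : Type*} [NormedAddCommGroup E]
    [InnerProductSpace ℝ E] [CompleteSpace E] {z u : ℝ → E} {A : E →L[ℝ] E} {v : E} {s : ℝ}
    (hz : HasDerivAt z (-(ContinuousLinearMap.adjoint A) (z s)) s) (hu : HasDerivAt u v s) :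
    HasDerivAt (fun r => ⟪z r, u r⟫_ℝ) ⟪z s, v - A (u s)⟫_ℝ s := by
  refine (hz.inner ℝ hu).congr_deriv ?_
  rw [inner_sub_right, inner_neg_left, ContinuousLinearMap.adjoint_inner_left]
  ring

theorem eq_div_sub_one_mul_integral_of_hasDerivAt {φ ψ : ℝ → ℝ} {ρ T t : ℝ} (hρ : ρ ≠ 1)
    (hφ : ∀ s ∈ uIcc (t - T) t, HasDerivAt φ (ψ s) s)
    (hψ : IntervalIntegrable ψ MeasureTheory.volume (t - T) t)
    (hF : φ t = ρ * φ (t - T)) :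
    φ t = ρ / (ρ - 1) * ∫ s in (t - T)..t, ψ s := by
  rw [integral_eq_sub_of_hasDerivAt hφ hψ]
  have : ρ - 1 ≠ 0 := sub_ne_zero.mpr hρ
  field_simp
  linear_combination -hF

theorem inner_eq_div_sub_one_mul_integral_of_hasDerivAt_adjoint {E : Type*}
    [NormedAddCommGroup E] [InnerProductSpace ℝ E] [CompleteSpace E] {z u v : ℝ → E}
    {A : ℝ → E →L[ℝ] E} {ρ T : ℝ} (hρ : ρ ≠ 1)
    (hz : ∀ s, HasDerivAt z (-(ContinuousLinearMap.adjoint (A s)) (z s)) s)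
    (hzF : ∀ s, z (s + T) = ρ • z s) (hu : ∀ s, HasDerivAt u (v s) s)
    (hu_per : Function.Periodic u T) (t : ℝ)
    (hint : IntervalIntegrable (fun s => ⟪z s, v s - A s (u s)⟫_ℝ) MeasureTheory.volume
      (t - T) t) :
    ⟪z t, u t⟫_ℝ = ρ / (ρ - 1) * ∫ s in (t - T)..t, ⟪z s, v s - A s (u s)⟫_ℝ := by
  refine eq_div_sub_one_mul_integral_of_hasDerivAt hρ
    (fun s _ => (hz s).inner_of_hasDerivAt_adjoint (hu s)) hint ?_
  rw [← hu_per.sub_eq t, ← sub_add_cancel t T, hzF, sub_add_cancel, real_inner_smul_left]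

theorem eventually_mul_lt_of_pos (C : ℝ) {δ : ℝ} (hδ : 0 < δ) :
    ∀ᶠ ε in 𝓝[>] (0 : ℝ), C * ε < δ :=
  nhdsWithin_le_nhds <|
    (continuous_const_mul C).tendsto' 0 0 (mul_zero C) |>.eventually_lt_const hδ

theorem eventually_norm_sub_sub_fderiv_le {E F ι : Type*} [NormedAddCommGroup E]
    [NormedSpace ℝ E] [NormedAddCommGroup F] [NormedSpace ℝ F] {f : E → F}
    (hf : ContDiff ℝ 1 f) {K : Set E} (hK : IsCompact K) {S : Set ι} {a : ι → E}
    (ha : ∀ i ∈ S, a i ∈ K) {y : ℝ → ι → E} {C : ℝ}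
    (hy : ∀ᶠ ε in 𝓝[>] 0, ∀ i ∈ S, ‖y ε i - a i‖ ≤ C * ε) {η : ℝ} (hη : 0 < η) :
    ∀ᶠ ε in 𝓝[>] 0, ∀ i ∈ S,
      ‖f (y ε i) - f (a i) - fderiv ℝ f (a i) (y ε i - a i)‖ ≤ η * ε := by
  have hη' : 0 < η / (|C| + 1) := by positivity
  obtain ⟨δ, hδ, hTaylor⟩ := hK.exists_norm_sub_sub_fderiv_le hf hη'
  filter_upwards [hy, eventually_mul_lt_of_pos C hδ, self_mem_nhdsWithin]
    with ε hyε hCε (hε : 0 < ε) i hi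
  calc ‖f (y ε i) - f (a i) - fderiv ℝ f (a i) (y ε i - a i)‖
      ≤ η / (|C| + 1) * ‖y ε i - a i‖ := by
        simpa only [add_sub_cancel] using hTaylor (a i) (ha i hi) (y ε i - a i) ((hyε i hi).trans_lt hCε)
    _ ≤ η / (|C| + 1) * ((|C| + 1) * ε) := by
        gcongr
        exact (hyε i hi).trans
          (mul_le_mul_of_nonneg_right ((le_abs_self C).trans (by linarith)) hε.le)
    _ = η * ε := by field_simp

theorem eventually_norm_linearization_error_le {E F : Type*} [NormedAddCommGroup E]
    [NormedSpace ℝ E] [NormedAddCommGroup F] [NormedSpace ℝ F] {f : E → F}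
    (hf : ContDiff ℝ 1 f) {g : ℝ → E → ℝ → F}
    (hg : Continuous fun p : ℝ × E × ℝ => g p.1 p.2.1 p.2.2) {x₀ : ℝ → E}
    (hx₀ : Continuous x₀) {y : ℝ → ℝ → E} {Δ : ℝ → ℝ} {C a b : ℝ}
    (hy : ∀ᶠ ε in 𝓝[>] 0, ∀ s ∈ Icc a b, ‖y ε s - x₀ s‖ ≤ C * ε)
    (hΔ : Tendsto Δ (𝓝[>] 0) (𝓝 0)) {η : ℝ} (hη : 0 < η) :
    ∀ᶠ ε in 𝓝[>] 0, ∀ s ∈ Icc a b,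
      ‖f (y ε s) + ε • g (s + Δ ε) (y ε s) ε - f (x₀ s) - fderiv ℝ f (x₀ s) (y ε s - x₀ s)
        - ε • g s (x₀ s) 0‖ ≤ η * ε := by
  have hK : IsCompact ((fun s => (s, x₀ s, (0 : ℝ))) '' Icc a b) :=
    isCompact_Icc.image (by fun_prop)
  obtain ⟨δ, hδ, hgδ⟩ := hK.exists_forall_dist_lt_of_continuousAt
    (fun p _ => hg.continuousAt) (half_pos hη)
  have hR := eventually_norm_sub_sub_fderiv_le hf (isCompact_Icc.image hx₀)
    (fun s hs => mem_image_of_mem x₀ hs) hy (half_pos hη)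
  have hΔδ : ∀ᶠ ε in 𝓝[>] (0 : ℝ), |Δ ε| < δ :=
    (hΔ.eventually (Metric.ball_mem_nhds 0 hδ)).mono fun ε h => by simpa using h
  filter_upwards [hR, hy, hΔδ, eventually_mul_lt_of_pos C hδ, Ioo_mem_nhdsGT hδ]
    with ε hRε hyε hΔε hCε ⟨hε, hεδ⟩ s hs
  have hgε : ‖g (s + Δ ε) (y ε s) ε - g s (x₀ s) 0‖ ≤ η / 2 := by
    rw [← dist_eq_norm, dist_comm]
    refine (hgδ _ (mem_image_of_mem _ hs) (s + Δ ε, y ε s, ε) ?_).le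
    rw [Prod.dist_eq, Prod.dist_eq, Real.dist_eq, Real.dist_eq, dist_eq_norm, norm_sub_rev]
    refine max_lt ?_ (max_lt ((hyε s hs).trans_lt hCε) ?_)
    · simpa using hΔε
    · simpa [abs_of_pos hε] using hεδ
  calc _ = ‖(f (y ε s) - f (x₀ s) - fderiv ℝ f (x₀ s) (y ε s - x₀ s))
          + ε • (g (s + Δ ε) (y ε s) ε - g s (x₀ s) 0)‖ := by
        congr 1; rw [smul_sub]; abel
    _ ≤ η / 2 * ε + ε * (η / 2) := by
        refine (norm_add_le _ _).trans (add_le_add (hRε s hs) ?_)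
        rw [norm_smul, Real.norm_of_nonneg hε.le]
        gcongr
    _ = η * ε := by ring

theorem inner_sub_mul_melnikov_eq_integral {E : Type*} [NormedAddCommGroup E]
    [InnerProductSpace ℝ E] [CompleteSpace E] {f : E → E} (hf : ContDiff ℝ 1 f)
    {g : ℝ → E → ℝ → E} (hg : Continuous fun p : ℝ × E × ℝ => g p.1 p.2.1 p.2.2)
    {T : ℝ} {x₀ : ℝ → E} (hx₀ : ∀ t, HasDerivAt x₀ (f (x₀ t)) t)
    (hx₀per : Function.Periodic x₀ T) {y : ℝ → E} {ε τ : ℝ}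
    (hy : ∀ t, HasDerivAt y (f (y t) + ε • g t (y t) ε) t) (hyper : Function.Periodic y T)
    {z : ℝ → E} {ρ : ℝ}
    (hz : ∀ t, HasDerivAt z (-(ContinuousLinearMap.adjoint (fderiv ℝ f (x₀ t))) (z t)) t)
    (hzF : ∀ t, z (t + T) = ρ • z t) (hρ : ρ ≠ 1) (t : ℝ) :
    ⟪z t, y (t + τ) - x₀ t⟫_ℝ - ε * (ρ / (ρ - 1) * ∫ s in (t - T)..t, ⟪z s, g s (x₀ s) 0⟫_ℝ)
      = ρ / (ρ - 1) * ∫ s in (t - T)..t, ⟪z s, f (y (s + τ)) + ε • g (s + τ) (y (s + τ)) ε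
          - f (x₀ s) - fderiv ℝ f (x₀ s) (y (s + τ) - x₀ s) - ε • g s (x₀ s) 0⟫_ℝ := by
  have hzc : Continuous z := continuous_iff_continuousAt.2 fun t => (hz t).continuousAt
  have hx₀c : Continuous x₀ := continuous_iff_continuousAt.2 fun t => (hx₀ t).continuousAt
  have hyc : Continuous y := continuous_iff_continuousAt.2 fun t => (hy t).continuousAt
  have hfc : Continuous f := hf.continuous
  have hvc : Continuous fun s => f (y (s + τ)) + ε • g (s + τ) (y (s + τ)) ε - f (x₀ s) := by
    have : Continuous fun s => g (s + τ) (y (s + τ)) ε :=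
      hg.comp (show Continuous fun s => (s + τ, y (s + τ), ε) by fun_prop)
    fun_prop
  have hg₀ : Continuous fun s => g s (x₀ s) 0 :=
    hg.comp (show Continuous fun s => (s, x₀ s, (0 : ℝ)) by fun_prop)
  have hDu : Continuous fun s => fderiv ℝ f (x₀ s) (y (s + τ) - x₀ s) :=
    ((hf.continuous_fderiv one_ne_zero).comp hx₀c).clm_apply (by fun_prop)
  have hrepr := inner_eq_div_sub_one_mul_integral_of_hasDerivAt_adjoint hρ hz hzF
    (u := fun s => y (s + τ) - x₀ s) (fun s => ((hy (s + τ)).comp_add_const s τ).sub (hx₀ s))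
    ((hyper.add_const τ).sub hx₀per) t
    (Continuous.intervalIntegrable (by fun_prop) _ _)
  have hmul : ε * (ρ / (ρ - 1) * ∫ s in (t - T)..t, ⟪z s, g s (x₀ s) 0⟫_ℝ)
      = ρ / (ρ - 1) * ∫ s in (t - T)..t, ε * ⟪z s, g s (x₀ s) 0⟫_ℝ := by
    rw [integral_const_mul]; ring
  rw [hrepr, hmul, ← mul_sub, ← integral_sub (Continuous.intervalIntegrable (by fun_prop) _ _)
    (Continuous.intervalIntegrable (by fun_prop) _ _)]
  simp only [inner_sub_right, real_inner_smul_right]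

theorem eventually_abs_inner_sub_mul_melnikov_le {E : Type*} [NormedAddCommGroup E]
    [InnerProductSpace ℝ E] [CompleteSpace E] {f : E → E} (hf : ContDiff ℝ 1 f)
    {g : ℝ → E → ℝ → E} (hg : Continuous fun p : ℝ × E × ℝ => g p.1 p.2.1 p.2.2)
    {T : ℝ} (hT : 0 < T) {x₀ : ℝ → E} (hx₀ : ∀ t, HasDerivAt x₀ (f (x₀ t)) t)
    (hx₀per : Function.Periodic x₀ T) {x : ℝ → ℝ → E} {Δ : ℝ → ℝ} {M ε₀ : ℝ} (hε₀ : 0 < ε₀)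
    (hx : ∀ ε ∈ Ioc 0 ε₀, ∀ t, HasDerivAt (x ε) (f (x ε t) + ε • g t (x ε t) ε) t)
    (hxper : ∀ ε ∈ Ioc 0 ε₀, Function.Periodic (x ε) T) (hΔ : Tendsto Δ (𝓝[>] 0) (𝓝 0))
    (hbound : ∀ ε ∈ Ioc 0 ε₀, ∀ t ∈ Icc 0 T, ‖x ε (t + Δ ε) - x₀ t‖ ≤ M * ε)
    {z : ℝ → E} {ρ : ℝ}
    (hz : ∀ t, HasDerivAt z (-(ContinuousLinearMap.adjoint (fderiv ℝ f (x₀ t))) (z t)) t)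
    (hzF : ∀ t, z (t + T) = ρ • z t) (hρ : ρ ≠ 1) {η : ℝ} (hη : 0 < η) :
    ∀ᶠ ε in 𝓝[>] 0, ∀ t ∈ Icc 0 T,
      |⟪z t, x ε (t + Δ ε) - x₀ t⟫_ℝ
        - ε * (ρ / (ρ - 1) * ∫ s in (t - T)..t, ⟪z s, g s (x₀ s) 0⟫_ℝ)| ≤ η * ε := by
  have hzc : Continuous z := continuous_iff_continuousAt.2 fun t => (hz t).continuousAt
  have hx₀c : Continuous x₀ := continuous_iff_continuousAt.2 fun t => (hx₀ t).continuousAt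
  obtain ⟨Z, hZ⟩ := isCompact_Icc.exists_bound_of_continuousOn (hzc.continuousOn (s := Icc (-T) T))
  have hZ0 : 0 ≤ Z := (norm_nonneg _).trans (hZ 0 ⟨by linarith, hT.le⟩)
  set c := |ρ / (ρ - 1)| * (Z * T)
  have hy : ∀ᶠ ε in 𝓝[>] 0, ∀ s ∈ Icc (-T) T, ‖x ε (s + Δ ε) - x₀ s‖ ≤ M * ε := by
    filter_upwards [Ioc_mem_nhdsGT hε₀] with ε hε s _ using
      (((hxper ε hε).add_const (Δ ε)).sub hx₀per).norm_le_of_forall_mem_Icc hT (hbound ε hε) s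
  filter_upwards [eventually_norm_linearization_error_le hf hg hx₀c hy hΔ
    (show 0 < η / (c + 1) by positivity), Ioc_mem_nhdsGT hε₀] with ε hwε hε t ht
  set w : ℝ → E := fun s => f (x ε (s + Δ ε)) + ε • g (s + Δ ε) (x ε (s + Δ ε)) ε - f (x₀ s)
    - fderiv ℝ f (x₀ s) (x ε (s + Δ ε) - x₀ s) - ε • g s (x₀ s) 0
  have hintegrand : ∀ s ∈ Ι (t - T) t, ‖⟪z s, w s⟫_ℝ‖ ≤ Z * (η / (c + 1) * ε) := by
    intro s hs
    rw [uIoc_of_le (by linarith)] at hs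
    have hs' : s ∈ Icc (-T) T := ⟨by linarith [hs.1, ht.1], hs.2.trans ht.2⟩
    exact (norm_inner_le_norm _ _).trans (mul_le_mul (hZ s hs') (hwε s hs') (norm_nonneg _) hZ0)
  have hintegral := norm_integral_le_of_norm_le_const hintegrand
  rw [show |t - (t - T)| = T by rw [sub_sub_cancel, abs_of_pos hT] ] at hintegral
  have hc : c / (c + 1) ≤ 1 := div_le_one_of_le₀ (by linarith) (by positivity)
  calc _ = |ρ / (ρ - 1)| * ‖∫ s in (t - T)..t, ⟪z s, w s⟫_ℝ‖ := by
        rw [inner_sub_mul_melnikov_eq_integral hf hg hx₀ hx₀per (hx ε hε) (hxper ε hε) hz hzF hρ,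
          abs_mul, Real.norm_eq_abs]
    _ ≤ |ρ / (ρ - 1)| * (Z * (η / (c + 1) * ε) * T) := by gcongr
    _ = c / (c + 1) * η * ε := by ring
    _ ≤ η * ε := mul_le_mul_of_nonneg_right (mul_le_of_le_one_left hη.le hc) hε.1.le

theorem two_sided_estimate_general
    (n : ℕ) (f : EuclideanSpace ℝ (Fin n) → EuclideanSpace ℝ (Fin n))
    (g : ℝ → EuclideanSpace ℝ (Fin n) → ℝ → EuclideanSpace ℝ (Fin n))
    (hf : ContDiff ℝ 1 f)
    (hg : Continuous fun p : ℝ × EuclideanSpace ℝ (Fin n) × ℝ => g p.1 p.2.1 p.2.2)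
    (T : ℝ) (hT : 0 < T)
    -- x₀ is a nondegenerate T-periodic limit cycle of ẋ = f(x)
    (x₀ : ℝ → EuclideanSpace ℝ (Fin n))
    (hx₀ : ∀ t, HasDerivAt x₀ (f (x₀ t)) t)
    (hx₀per : Function.Periodic x₀ T)
    -- x_ε are T-periodic solutions of the perturbed system with ‖x_ε(·+Δ_ε) − x₀‖ ≤ Mε
    (x : ℝ → ℝ → EuclideanSpace ℝ (Fin n)) (Δ : ℝ → ℝ)
    (M ε₀ : ℝ) (hε₀ : 0 < ε₀)
    (hx : ∀ ε ∈ Set.Ioc 0 ε₀, ∀ t,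
      HasDerivAt (x ε) (f (x ε t) + ε • g t (x ε t) ε) t)
    (hxper : ∀ ε ∈ Set.Ioc 0 ε₀, Function.Periodic (x ε) T)
    (hΔ : Filter.Tendsto Δ (nhdsWithin 0 (Set.Ioi 0)) (nhds 0))
    (hbound : ∀ ε ∈ Set.Ioc 0 ε₀, ∀ t ∈ Set.Icc (0:ℝ) T,
      ‖x ε (t + Δ ε) - x₀ t‖ ≤ M * ε)
    -- z is a not T-periodic Floquet eigenfunction of the adjoint system, multiplier ρ ≠ 1
    (z : ℝ → EuclideanSpace ℝ (Fin n)) (ρ : ℝ)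
    (hz : ∀ t, HasDerivAt z (-(ContinuousLinearMap.adjoint (fderiv ℝ f (x₀ t))) (z t)) t)
    (hzF : ∀ t, z (t + T) = ρ • z t)
    (hρ : ρ ≠ 1)
    (hMz : ∀ t ∈ Set.Icc (0:ℝ) T,
      ((ρ / (ρ - 1)) * ∫ s in (t - T)..t, (inner ℝ (z s) (g s (x₀ s) 0) : ℝ)) ≠ 0) :
    ∃ c₁ c₂ : ℝ, 0 < c₁ ∧ c₁ ≤ c₂ ∧ ∃ ε₁ > 0, ∀ ε ∈ Set.Ioc 0 ε₁, ∀ t ∈ Set.Icc (0:ℝ) T,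
      c₁ * ε ≤ ‖x ε (t + Δ ε) - x₀ t‖ ∧ ‖x ε (t + Δ ε) - x₀ t‖ ≤ c₂ * ε := by
  have hzc : Continuous z := continuous_iff_continuousAt.2 fun t => (hz t).continuousAt
  have hx₀c : Continuous x₀ := continuous_iff_continuousAt.2 fun t => (hx₀ t).continuousAt
  have hMc : Continuous fun t => ρ / (ρ - 1) * ∫ s in (t - T)..t, ⟪z s, g s (x₀ s) 0⟫_ℝ :=
    continuous_const.mul (Continuous.continuous_intervalIntegral_sub_const
      (hzc.inner (hg.comp (show Continuous fun s => (s, x₀ s, (0 : ℝ)) by fun_prop))) T)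
  obtain ⟨m, hm, hmM⟩ := isCompact_Icc.exists_pos_forall_le_abs hMc.continuousOn hMz
  obtain ⟨Z, hZ, hzZ⟩ := ((isCompact_Icc (a := 0) (b := T)).image hzc).isBounded.exists_pos_norm_le
  obtain ⟨ε₁, hε₁, hsmall⟩ := mem_nhdsGT_iff_exists_Ioc_subset.mp
    ((eventually_abs_inner_sub_mul_melnikov_le hf hg hT hx₀ hx₀per hε₀ hx hxper hΔ hbound hz hzF
      hρ (half_pos hm)).and (Ioc_mem_nhdsGT hε₀))
  refine ⟨m / (2 * Z), max M (m / (2 * Z)), by positivity, le_max_right _ _, ε₁, hε₁,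
    fun ε hε t ht => ⟨?_, ?_⟩⟩
  · obtain ⟨hclose, -⟩ := hsmall hε
    have hMt : ε * m ≤ |ε * (ρ / (ρ - 1) * ∫ s in (t - T)..t, ⟪z s, g s (x₀ s) 0⟫_ℝ)| := by
      rw [abs_mul, abs_of_pos hε.1]
      exact mul_le_mul_of_nonneg_left (hmM t ht) hε.1.le
    have hCS : |⟪z t, x ε (t + Δ ε) - x₀ t⟫_ℝ| ≤ Z * ‖x ε (t + Δ ε) - x₀ t‖ :=
      (abs_real_inner_le_norm _ _).trans
        (mul_le_mul_of_nonneg_right (hzZ _ (mem_image_of_mem z ht)) (norm_nonneg _))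
    have hrev := abs_sub_abs_le_abs_sub
      (ε * (ρ / (ρ - 1) * ∫ s in (t - T)..t, ⟪z s, g s (x₀ s) 0⟫_ℝ))
      ⟪z t, x ε (t + Δ ε) - x₀ t⟫_ℝ
    rw [abs_sub_comm] at hrev
    rw [div_mul_eq_mul_div, div_le_iff₀ (by positivity)]
    linarith [hclose t ht]
  · exact (hbound ε (hsmall hε).2 t ht).trans
      (mul_le_mul_of_nonneg_right (le_max_left _ _) hε.1.le)

/-- Corollary 3.4, two-sided estimate: if moreover `M⊥_z(t) ≠ 0` for every
`t ∈ [0,T]` for some not-`T`-periodic eigenfunction `z`, then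
`c₁ ε ≤ ‖x_ε(t+Δ_ε) − x₀(t)‖ ≤ c₂ ε` on `[0,T]` for all small `ε > 0`. -/
theorem two_sided_estimate
    (n : ℕ) (f : EuclideanSpace ℝ (Fin n) → EuclideanSpace ℝ (Fin n))
    (g : ℝ → EuclideanSpace ℝ (Fin n) → ℝ → EuclideanSpace ℝ (Fin n))
    (hf : ContDiff ℝ 1 f)
    (hg : Continuous fun p : ℝ × EuclideanSpace ℝ (Fin n) × ℝ => g p.1 p.2.1 p.2.2)
    (T : ℝ) (hT : 0 < T)
    (hgper : ∀ t x ε, g (t + T) x ε = g t x ε)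
    -- x₀ is a nondegenerate T-periodic limit cycle of ẋ = f(x)
    (x₀ : ℝ → EuclideanSpace ℝ (Fin n))
    (hx₀ : ∀ t, HasDerivAt x₀ (f (x₀ t)) t)
    (hx₀per : Function.Periodic x₀ T)
    (Y : ℝ → (EuclideanSpace ℝ (Fin n) →L[ℝ] EuclideanSpace ℝ (Fin n)))
    (hY0 : Y 0 = ContinuousLinearMap.id ℝ _)
    (hY : ∀ t, HasDerivAt Y ((fderiv ℝ f (x₀ t)).comp (Y t)) t)
    (hnondeg : Module.finrank ℝ
      ↥(⨆ k : ℕ, LinearMap.ker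
        (((Y T : Module.End ℝ (EuclideanSpace ℝ (Fin n))) - 1) ^ k)) = 1)
    -- x_ε are T-periodic solutions of the perturbed system with ‖x_ε(·+Δ_ε) − x₀‖ ≤ Mε
    (x : ℝ → ℝ → EuclideanSpace ℝ (Fin n)) (Δ : ℝ → ℝ)
    (M ε₀ : ℝ) (hM : 0 < M) (hε₀ : 0 < ε₀)
    (hx : ∀ ε ∈ Set.Ioc 0 ε₀, ∀ t,
      HasDerivAt (x ε) (f (x ε t) + ε • g t (x ε t) ε) t)
    (hxper : ∀ ε ∈ Set.Ioc 0 ε₀, Function.Periodic (x ε) T)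
    (hΔ : Filter.Tendsto Δ (nhdsWithin 0 (Set.Ioi 0)) (nhds 0))
    (hbound : ∀ ε ∈ Set.Ioc 0 ε₀, ∀ t ∈ Set.Icc (0:ℝ) T,
      ‖x ε (t + Δ ε) - x₀ t‖ ≤ M * ε)
    -- z is a not T-periodic Floquet eigenfunction of the adjoint system, multiplier ρ ≠ 1
    (z : ℝ → EuclideanSpace ℝ (Fin n)) (ρ : ℝ)
    (hz : ∀ t, HasDerivAt z (-(ContinuousLinearMap.adjoint (fderiv ℝ f (x₀ t))) (z t)) t)
    (hzF : ∀ t, z (t + T) = ρ • z t)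
    (hρ : ρ ≠ 1) (hz0 : z ≠ 0)
    (hMz : ∀ t ∈ Set.Icc (0:ℝ) T,
      ((ρ / (ρ - 1)) * ∫ s in (t - T)..t, (inner ℝ (z s) (g s (x₀ s) 0) : ℝ)) ≠ 0) :
    ∃ c₁ c₂ : ℝ, 0 < c₁ ∧ c₁ ≤ c₂ ∧ ∃ ε₁ > 0, ∀ ε ∈ Set.Ioc 0 ε₁, ∀ t ∈ Set.Icc (0:ℝ) T,
      c₁ * ε ≤ ‖x ε (t + Δ ε) - x₀ t‖ ∧ ‖x ε (t + Δ ε) - x₀ t‖ ≤ c₂ * ε :=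
  two_sided_estimate_general n f g hf hg T hT x₀ hx₀ hx₀per x Δ M ε₀ hε₀ hx hxper hΔ hbound z ρ hz
    hzF hρ hMz
end

section
/- (Lemma 3.6, uniform angle bound.) Assume the hypotheses of Theorem 3.1 and that the adjoint system ż = −(f'(x₀(t)))* z has n linearly independent Floquet eigenfunctions, and let Δ_ε be defined via the transversal surface S as in Corollary 2.2. Then there exists α* > 0 such that for all sufficiently small ε > 0 with x_ε(Δ_ε) ≠ x₀(0), there is a not-T-periodic Floquet eigenfunction z of the adjoint system with |cos∠(z(0), x_ε(Δ_ε) − x₀(0))| ≥ α*. -/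
/-!
With `w_ε = A v_ε`, the point `x_ε(Δ_ε)` is the time-`T` image of `x₀(0) + w_ε` under the flow.
For an adjoint solution `z` and a trajectory `u`, `d/dt ⟪z, u - x₀⟫ = o(‖u - x₀‖)`, so Gronwall
gives `‖x_ε(Δ_ε) - x₀(0)‖ = O(‖w_ε‖)` and, for a Floquet solution with multiplier `ρ`,
`ρ ⟪z(0), x_ε(Δ_ε) - x₀(0)⟫ = ⟪z(0), w_ε⟫ + o(‖w_ε‖)`.

Nondegeneracy allows at most one multiplier `1`, so the `z(0)` with `ρ ≠ 1` span a hyperplane.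
It is orthogonal to the periodic solution `f(x₀(t))` of the variational equation, hence equals
`f(x₀(0))ᗮ`, which is transversal to the range of `A`. By compactness some such `z(0)` has
`|⟪z(0), w⟫| ≥ m ‖w‖` on the range of `A`, and the two estimates turn this into the angle bound.
-/

open Set Filter Topology Metric Asymptotics Module
open scoped NNReal RealInnerProductSpace

section Flow

variable {E : Type*} [NormedAddCommGroup E] [NormedSpace ℝ E]

theorem dist_le_mul_exp_of_lipschitzOnWith_closedBall {F : E → E} {p u : ℝ → E} {K : ℝ≥0}
    {T δ r : ℝ} (hlip : ∀ t ∈ Icc 0 T, LipschitzOnWith K F (closedBall (p t) r))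
    (hp : ∀ t, HasDerivAt p (F (p t)) t) (hu : ∀ t, HasDerivAt u (F (u t)) t)
    (h0 : dist (u 0) (p 0) ≤ δ) (hsmall : δ * Real.exp (K * T) < r) :
    ∀ t ∈ Icc 0 T, dist (u t) (p t) ≤ δ * Real.exp (K * t) := by
  have hpc : Continuous p := continuous_iff_continuousAt.2 fun t => (hp t).continuousAt
  have huc : Continuous u := continuous_iff_continuousAt.2 fun t => (hu t).continuousAt
  have hdc : Continuous fun t => dist (u t) (p t) := huc.dist hpc
  have hδ : 0 ≤ δ := dist_nonneg.trans h0
  -- continuous induction: Gronwall restarted at any time `x` reached inside the tube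
  refine IsClosed.Icc_subset_of_forall_mem_nhdsWithin
    (s := {t | dist (u t) (p t) ≤ δ * Real.exp (K * t)})
    ((isClosed_le hdc (by fun_prop)).inter isClosed_Icc) (by simpa using h0) ?_
  rintro x ⟨hx, hx0, hxT⟩
  have hxr : dist (u x) (p x) < r :=
    (show dist (u x) (p x) ≤ _ from hx).trans_lt (lt_of_le_of_lt (by gcongr) hsmall)
  obtain ⟨l, b, ⟨hlx, hxb⟩, hsub⟩ :=
    mem_nhds_iff_exists_Ioo_subset.1 ((isOpen_lt hdc continuous_const).mem_nhds hxr)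
  have hxb' : x < min b T := lt_min hxb hxT
  have hgron := dist_le_of_trajectories_ODE_of_mem (v := fun _ => F)
    (s := fun t => closedBall (p t) r)
    (fun t ht => hlip t ⟨hx0.trans ht.1, ht.2.le.trans (min_le_right _ _)⟩)
    huc.continuousOn (fun t _ => (hu t).hasDerivWithinAt)
    (fun t ht => mem_closedBall.2 (hsub ⟨hlx.trans_le ht.1, ht.2.trans_le (min_le_left _ _)⟩).le)
    hpc.continuousOn (fun t _ => (hp t).hasDerivWithinAt)
    (fun t _ => mem_closedBall_self (dist_nonneg.trans hxr.le)) hx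
  refine mem_of_superset (Ico_mem_nhdsGT hxb') fun t ht => ?_
  calc dist (u t) (p t) ≤ δ * Real.exp (K * x) * Real.exp (K * (t - x)) :=
        hgron t (Ico_subset_Icc_self ht)
    _ = δ * Real.exp (K * t) := by rw [mul_assoc, ← Real.exp_add]; ring_nf

variable [ProperSpace E]

theorem exists_forall_norm_flow_sub_le {f : E → E} (hf : ContDiff ℝ 1 f) {p : ℝ → E}
    (hp : ∀ t, HasDerivAt p (f (p t)) t) {Φ : E → ℝ → E}
    (hΦ : ∀ w t, HasDerivAt (Φ w) (f (Φ w t)) t) (hΦ0 : ∀ w, Φ w 0 = p 0 + w) (T : ℝ) :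
    ∃ C > 0, ∀ᶠ w in 𝓝 0, ∀ t ∈ Icc 0 T, ‖Φ w t - p t‖ ≤ C * ‖w‖ := by
  have hpc : Continuous p := continuous_iff_continuousAt.2 fun t => (hp t).continuousAt
  obtain ⟨K, hK⟩ := hf.locallyLipschitz.locallyLipschitzOn.exists_lipschitzOnWith_of_compact
    (((isCompact_Icc (a := 0) (b := T)).image hpc).cthickening (r := 1))
  refine ⟨Real.exp (K * T), Real.exp_pos _, ?_⟩
  filter_upwards [ball_mem_nhds (0 : E) (inv_pos.2 (Real.exp_pos (K * T)))] with w hw t ht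
  rw [mem_ball_zero_iff, ← one_div, lt_div_iff₀ (Real.exp_pos _)] at hw
  have hgron := dist_le_mul_exp_of_lipschitzOnWith_closedBall
    (fun s hs => hK.mono (closedBall_subset_cthickening (mem_image_of_mem p hs) 1)) hp (hΦ w)
    (by rw [hΦ0, dist_eq_norm, add_sub_cancel_left]) hw t ht
  rw [dist_eq_norm, mul_comm] at hgron
  exact hgron.trans (by gcongr; exact ht.2)


theorem ContDiff.exists_forall_norm_sub_sub_fderiv_le {F : Type*} [NormedAddCommGroup F]
    [NormedSpace ℝ F] {f : E → F} (hf : ContDiff ℝ 1 f) {s : Set E} (hs : IsCompact s)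
    {η : ℝ} (hη : 0 < η) :
    ∃ δ > 0, ∀ b ∈ s, ∀ a, ‖a - b‖ ≤ δ → ‖f a - f b - fderiv ℝ f b (a - b)‖ ≤ η * ‖a - b‖ := by
  obtain ⟨δ, hδ, hunif⟩ := Metric.uniformContinuousOn_iff.1
    ((hs.cthickening (r := 1)).uniformContinuousOn_of_continuous
      (hf.continuous_fderiv one_ne_zero).continuousOn) η hη
  refine ⟨min 1 (δ / 2), by positivity, fun b hb a ha => ?_⟩
  have hball : closedBall b (min 1 (δ / 2)) ⊆ cthickening 1 s :=
    (closedBall_subset_closedBall (min_le_left _ _)).trans (closedBall_subset_cthickening hb 1)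
  have hbound : ∀ c ∈ closedBall b (min 1 (δ / 2)), ‖fderiv ℝ f c - fderiv ℝ f b‖ ≤ η := by
    intro c hc
    rw [← dist_eq_norm]
    refine (hunif c (hball hc) b (hball (mem_closedBall_self (by positivity))) ?_).le
    exact (mem_closedBall.1 hc).trans_lt ((min_le_right _ _).trans_lt (half_lt_self hδ))
  have hmvt := Convex.norm_image_sub_le_of_norm_hasFDerivWithin_le
    (f := fun x => f x - fderiv ℝ f b x)
    (fun c _ => (((hf.differentiable one_ne_zero) c).hasFDerivAt.sub
      (fderiv ℝ f b).hasFDerivAt).hasFDerivWithinAt)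
    hbound (convex_closedBall _ _) (mem_closedBall_self (by positivity))
    (mem_closedBall_iff_norm.2 ha)
  rwa [sub_sub_sub_comm, ← map_sub] at hmvt

end Flow

section InnerProductSpace

variable {E : Type*} [NormedAddCommGroup E] [InnerProductSpace ℝ E]

theorem mem_orthogonal_span_range_of_inner_eq_zero {ι : Type*} {u : ι → E} {v : E}
    (h : ∀ i, ⟪u i, v⟫ = 0) : v ∈ (Submodule.span ℝ (range u))ᗮ := by
  have hker : Submodule.span ℝ (range u) ≤ LinearMap.ker (innerSL ℝ v : E →ₗ[ℝ] ℝ) :=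
    Submodule.span_le.2 <| range_subset_iff.2 fun i => by simpa [real_inner_comm] using h i
  exact (Submodule.mem_orthogonal' _ _).2 fun x hx => by simpa using hker hx

theorem finrank_orthogonal_range_le_finrank_iSup_ker [FiniteDimensional ℝ E]
    (M : Module.End ℝ E) :
    finrank ℝ (LinearMap.range M)ᗮ ≤ finrank ℝ ↥(⨆ k : ℕ, LinearMap.ker (M ^ k)) := by
  have hker : LinearMap.ker M ≤ ⨆ k : ℕ, LinearMap.ker (M ^ k) := by
    simpa using le_iSup (fun k : ℕ => LinearMap.ker (M ^ k)) 1
  have h1 := LinearMap.finrank_range_add_finrank_ker M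
  have h2 := (LinearMap.range M).finrank_add_finrank_orthogonal
  have h3 := Submodule.finrank_mono hker
  omega

theorem Submodule.exists_pos_forall_exists_mul_norm_le_abs_inner [FiniteDimensional ℝ E]
    {ι : Type*} [Fintype ι] (V : Submodule ℝ E) (u : ι → E)
    (h : V ⊓ (Submodule.span ℝ (range u))ᗮ = ⊥) :
    ∃ m > 0, ∀ w ∈ V, w ≠ 0 → ∃ i, m * ‖w‖ ≤ |⟪u i, w⟫| := by
  set L : V →ₗ[ℝ] ι → ℝ := (LinearMap.pi fun i => (innerSL ℝ (u i) : E →ₗ[ℝ] ℝ)).comp V.subtype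
  have hL : LinearMap.ker L = ⊥ := LinearMap.ker_eq_bot'.2 fun w hw =>
    Subtype.ext <| (Submodule.eq_bot_iff _).1 h w ⟨w.2,
      mem_orthogonal_span_range_of_inner_eq_zero fun i => by simpa [L] using congr_fun hw i⟩
  obtain ⟨K, hK, hanti⟩ := L.exists_antilipschitzWith hL
  refine ⟨(K : ℝ)⁻¹, by positivity, fun w hw hw0 => ?_⟩
  by_contra! hlt
  have hLw : ‖L ⟨w, hw⟩‖ < (K : ℝ)⁻¹ * ‖w‖ :=
    (pi_norm_lt_iff (by positivity)).2 fun i => by simpa [L] using hlt i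
  have hw' := hanti.le_mul_norm (map_zero L) ⟨w, hw⟩
  rw [Submodule.coe_norm] at hw'
  have : ‖w‖ < ‖w‖ := calc
    ‖w‖ ≤ K * ‖L ⟨w, hw⟩‖ := hw'
    _ < K * ((K : ℝ)⁻¹ * ‖w‖) := by gcongr
    _ = ‖w‖ := by field_simp
  exact this.false

theorem div_le_abs_inner_div_of_abs_mul_inner_sub_le {z y w : E} {ρ m C K : ℝ} (hm : 0 < m)
    (hz : z ≠ 0) (hy : y ≠ 0) (hK : |ρ| * ‖z‖ ≤ K) (hyw : ‖y‖ ≤ C * ‖w‖)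
    (hw : m * ‖w‖ ≤ |⟪z, w⟫|) (hlin : |ρ * ⟪z, y⟫ - ⟪z, w⟫| ≤ m / 2 * ‖w‖) :
    m / (2 * C * K) ≤ |⟪z, y⟫| / (‖z‖ * ‖y‖) := by
  have hzpos : 0 < ‖z‖ := norm_pos_iff.2 hz
  have hypos : 0 < ‖y‖ := norm_pos_iff.2 hy
  have hC : 0 < C := pos_of_mul_pos_left (hypos.trans_le hyw) (norm_nonneg w)
  have hρy : m / 2 * ‖w‖ ≤ |ρ| * |⟪z, y⟫| := by
    rw [← abs_mul]
    have := abs_sub_abs_le_abs_sub ⟪z, w⟫ (ρ * ⟪z, y⟫)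
    rw [abs_sub_comm] at this
    linarith
  rcases (abs_nonneg ρ).eq_or_lt with hρ | hρ
  · rw [← hρ, zero_mul] at hρy
    have : ‖w‖ = 0 := by nlinarith [norm_nonneg w]
    rw [this, mul_zero] at hyw
    exact absurd hypos hyw.not_gt
  have hKpos : 0 < K := (mul_pos hρ hzpos).trans_le hK
  rw [div_le_div_iff₀ (by positivity) (by positivity)]
  calc m * (‖z‖ * ‖y‖) ≤ m * (‖z‖ * (C * ‖w‖)) := by gcongr
    _ = 2 * C * ‖z‖ * (m / 2 * ‖w‖) := by ring
    _ ≤ 2 * C * ‖z‖ * (|ρ| * |⟪z, y⟫|) := by gcongr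
    _ = 2 * C * (|ρ| * ‖z‖) * |⟪z, y⟫| := by ring
    _ ≤ 2 * C * K * |⟪z, y⟫| := by gcongr
    _ = |⟪z, y⟫| * (2 * C * K) := by ring

end InnerProductSpace

section Adjoint

variable {E : Type*} [NormedAddCommGroup E] [InnerProductSpace ℝ E] [CompleteSpace E]

theorem hasDerivAt_inner_of_adjoint_s14 {z w : ℝ → E} {B : E →L[ℝ] E} {w' : E} {t : ℝ}
    (hz : HasDerivAt z (-(ContinuousLinearMap.adjoint B) (z t)) t) (hw : HasDerivAt w w' t) :
    HasDerivAt (fun s => ⟪z s, w s⟫) ⟪z t, w' - B (w t)⟫ t := by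
  refine (hz.inner ℝ hw).congr_deriv ?_
  rw [inner_sub_right, inner_neg_left, ContinuousLinearMap.adjoint_inner_left]
  ring

theorem abs_inner_sub_inner_le {f : E → E} {B : ℝ → E →L[ℝ] E} {p u z : ℝ → E} {T Z r : ℝ}
    (hT : 0 ≤ T) (hp : ∀ t, HasDerivAt p (f (p t)) t) (hu : ∀ t, HasDerivAt u (f (u t)) t)
    (hz : ∀ t, HasDerivAt z (-(ContinuousLinearMap.adjoint (B t)) (z t)) t)
    (hZ : ∀ t ∈ Icc 0 T, ‖z t‖ ≤ Z)
    (hr : ∀ t ∈ Icc 0 T, ‖f (u t) - f (p t) - B t (u t - p t)‖ ≤ r) :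
    |⟪z T, u T - p T⟫ - ⟪z 0, u 0 - p 0⟫| ≤ Z * r * T := by
  have hderiv : ∀ t, HasDerivAt (fun s => ⟪z s, u s - p s⟫)
      ⟪z t, f (u t) - f (p t) - B t (u t - p t)⟫ t :=
    fun t => hasDerivAt_inner_of_adjoint_s14 (hz t) ((hu t).sub (hp t))
  have hZ0 : 0 ≤ Z := (norm_nonneg _).trans (hZ 0 (left_mem_Icc.2 hT))
  have hmvt := Convex.norm_image_sub_le_of_norm_hasDerivWithin_le
    (fun t _ => (hderiv t).hasDerivWithinAt)
    (fun t ht => (abs_real_inner_le_norm _ _).trans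
      (mul_le_mul (hZ t ht) (hr t ht) (norm_nonneg _) hZ0))
    (convex_Icc 0 T) (left_mem_Icc.2 hT) (right_mem_Icc.2 hT)
  rwa [Real.norm_eq_abs, Real.norm_eq_abs, sub_zero, abs_of_nonneg hT] at hmvt

theorem isLittleO_inner_flow_sub [FiniteDimensional ℝ E] {f : E → E} (hf : ContDiff ℝ 1 f)
    {p z : ℝ → E} (hp : ∀ t, HasDerivAt p (f (p t)) t) {Φ : E → ℝ → E}
    (hΦ : ∀ w t, HasDerivAt (Φ w) (f (Φ w t)) t) (hΦ0 : ∀ w, Φ w 0 = p 0 + w)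
    (hz : ∀ t, HasDerivAt z (-(ContinuousLinearMap.adjoint (fderiv ℝ f (p t))) (z t)) t)
    {T : ℝ} (hT : 0 ≤ T) :
    (fun w => ⟪z T, Φ w T - p T⟫ - ⟪z 0, w⟫) =o[𝓝 0] id := by
  have hpc : Continuous p := continuous_iff_continuousAt.2 fun t => (hp t).continuousAt
  have hzc : Continuous z := continuous_iff_continuousAt.2 fun t => (hz t).continuousAt
  obtain ⟨C, hC, hflow⟩ := exists_forall_norm_flow_sub_le hf hp hΦ hΦ0 T
  obtain ⟨Z, hZ⟩ := (isCompact_Icc (a := 0) (b := T)).exists_bound_of_continuousOn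
    hzc.continuousOn
  have hZ0 : 0 ≤ Z := (norm_nonneg _).trans (hZ 0 (left_mem_Icc.2 hT))
  refine IsLittleO.of_bound fun c hc => ?_
  set η := c / (Z * C * T + 1)
  have hη : 0 < η := by positivity
  have hηc : Z * C * T * η ≤ c := by
    rw [mul_div_assoc', div_le_iff₀ (by positivity)]
    nlinarith
  obtain ⟨δ, hδ, hrem⟩ := hf.exists_forall_norm_sub_sub_fderiv_le
    ((isCompact_Icc (a := 0) (b := T)).image hpc) hη
  filter_upwards [hflow, ball_mem_nhds (0 : E) (div_pos hδ hC)] with w hw hwδ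
  rw [mem_ball_zero_iff, lt_div_iff₀ hC] at hwδ
  have hr : ∀ t ∈ Icc 0 T,
      ‖f (Φ w t) - f (p t) - fderiv ℝ f (p t) (Φ w t - p t)‖ ≤ η * (C * ‖w‖) := fun t ht =>
    (hrem _ (mem_image_of_mem p ht) _ ((hw t ht).trans (by linarith))).trans
      (by gcongr; exact hw t ht)
  have hpair := abs_inner_sub_inner_le hT hp (hΦ w) hz hZ hr
  rw [hΦ0, add_sub_cancel_left] at hpair
  calc ‖⟪z T, Φ w T - p T⟫ - ⟪z 0, w⟫‖ ≤ Z * (η * (C * ‖w‖)) * T := hpair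
    _ = Z * C * T * η * ‖id w‖ := by rw [id]; ring
    _ ≤ c * ‖id w‖ := by gcongr

end Adjoint

section Floquet

variable {E : Type*} [NormedAddCommGroup E] [InnerProductSpace ℝ E] [CompleteSpace E]
  {B : ℝ → E →L[ℝ] E} {z w : ℝ → E}

theorem inner_eq_inner_of_adjoint
    (hz : ∀ t, HasDerivAt z (-(ContinuousLinearMap.adjoint (B t)) (z t)) t)
    (hw : ∀ t, HasDerivAt w (B t (w t)) t) (s t : ℝ) : ⟪z s, w s⟫ = ⟪z t, w t⟫ := by
  have hderiv : ∀ t, HasDerivAt (fun s => ⟪z s, w s⟫) 0 t := fun t => by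
    simpa using hasDerivAt_inner_of_adjoint_s14 (hz t) (hw t)
  exact is_const_of_deriv_eq_zero (fun t => (hderiv t).differentiableAt)
    (fun t => (hderiv t).deriv) s t

theorem inner_eq_zero_of_floquet_ne_one
    (hz : ∀ t, HasDerivAt z (-(ContinuousLinearMap.adjoint (B t)) (z t)) t)
    (hw : ∀ t, HasDerivAt w (B t (w t)) t) {T ρ : ℝ} (hzT : z T = ρ • z 0) (hwT : w T = w 0)
    (hρ : ρ ≠ 1) : ⟪z 0, w 0⟫ = 0 := by
  have h := inner_eq_inner_of_adjoint hz hw T 0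
  rw [hzT, hwT, real_inner_smul_left] at h
  have hfac : (ρ - 1) * ⟪z 0, w 0⟫ = 0 := by rw [sub_mul, one_mul, h, sub_self]
  exact (mul_eq_zero.1 hfac).resolve_left (sub_ne_zero.2 hρ)

theorem mem_orthogonal_range_monodromy_sub_one {Y : ℝ → E →L[ℝ] E}
    (hY0 : Y 0 = ContinuousLinearMap.id ℝ E) (hY : ∀ t, HasDerivAt Y ((B t).comp (Y t)) t)
    (hz : ∀ t, HasDerivAt z (-(ContinuousLinearMap.adjoint (B t)) (z t)) t) {T : ℝ}
    (hzT : z T = z 0) : z 0 ∈ (LinearMap.range ((Y T : Module.End ℝ E) - 1))ᗮ := by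
  rw [Submodule.mem_orthogonal']
  rintro _ ⟨u, rfl⟩
  have h := inner_eq_inner_of_adjoint hz (w := fun t => Y t u)
    (fun t => by simpa using (hY t).clm_apply (hasDerivAt_const t u)) T 0
  simp only [hzT, hY0, ContinuousLinearMap.id_apply] at h
  simp [inner_sub_right, h]

theorem card_floquet_eq_one_le_one [FiniteDimensional ℝ E] {ι : Type*} [Fintype ι]
    {Y : ℝ → E →L[ℝ] E} (hY0 : Y 0 = ContinuousLinearMap.id ℝ E)
    (hY : ∀ t, HasDerivAt Y ((B t).comp (Y t)) t) {T : ℝ}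
    (hnondeg : finrank ℝ ↥(⨆ k : ℕ, LinearMap.ker (((Y T : Module.End ℝ E) - 1) ^ k)) ≤ 1)
    {zs : ι → ℝ → E} {ρs : ι → ℝ}
    (hzs : ∀ i t, HasDerivAt (zs i) (-(ContinuousLinearMap.adjoint (B t)) (zs i t)) t)
    (hzsT : ∀ i, zs i T = ρs i • zs i 0) (hind : LinearIndependent ℝ fun i => zs i 0) :
    Fintype.card {i // ρs i = 1} ≤ 1 := by
  have hspan : Submodule.span ℝ (range fun i : {i // ρs i = 1} => zs i 0) ≤
      (LinearMap.range ((Y T : Module.End ℝ E) - 1))ᗮ :=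
    Submodule.span_le.2 <| range_subset_iff.2 fun i =>
      mem_orthogonal_range_monodromy_sub_one hY0 hY (hzs i) (by rw [hzsT, i.2, one_smul])
  calc Fintype.card {i // ρs i = 1}
      = finrank ℝ (Submodule.span ℝ (range fun i : {i // ρs i = 1} => zs i 0)) :=
        (finrank_span_eq_card (hind.comp _ Subtype.val_injective)).symm
    _ ≤ finrank ℝ (LinearMap.range ((Y T : Module.End ℝ E) - 1))ᗮ := Submodule.finrank_mono hspan
    _ ≤ 1 := (finrank_orthogonal_range_le_finrank_iSup_ker _).trans hnondeg

theorem orthogonal_span_floquet_ne_one_eq [FiniteDimensional ℝ E] {ι : Type*} [Fintype ι]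
    {Y : ℝ → E →L[ℝ] E} (hY0 : Y 0 = ContinuousLinearMap.id ℝ E)
    (hY : ∀ t, HasDerivAt Y ((B t).comp (Y t)) t) {T : ℝ}
    (hnondeg : finrank ℝ ↥(⨆ k : ℕ, LinearMap.ker (((Y T : Module.End ℝ E) - 1) ^ k)) ≤ 1)
    {zs : ι → ℝ → E} {ρs : ι → ℝ}
    (hzs : ∀ i t, HasDerivAt (zs i) (-(ContinuousLinearMap.adjoint (B t)) (zs i t)) t)
    (hzsT : ∀ i, zs i T = ρs i • zs i 0) (hind : LinearIndependent ℝ fun i => zs i 0)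
    (hcard : Fintype.card ι = finrank ℝ E) {e : ℝ → E} (he : ∀ t, HasDerivAt e (B t (e t)) t)
    (heT : e T = e 0) (he0 : e 0 ≠ 0) :
    (Submodule.span ℝ (range fun i : {i // ρs i ≠ 1} => zs i 0))ᗮ = ℝ ∙ e 0 := by
  set W := Submodule.span ℝ (range fun i : {i // ρs i ≠ 1} => zs i 0)
  have he0W : e 0 ∈ Wᗮ := mem_orthogonal_span_range_of_inner_eq_zero fun i =>
    inner_eq_zero_of_floquet_ne_one (hzs i) he (hzsT i) heT i.2
  have hfinrankW : finrank ℝ W = Fintype.card {i // ρs i ≠ 1} :=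
    finrank_span_eq_card (hind.comp _ Subtype.val_injective)
  have hone := card_floquet_eq_one_le_one hY0 hY hnondeg hzs hzsT hind
  have hcompl : Fintype.card {i // ρs i ≠ 1} = Fintype.card ι - Fintype.card {i // ρs i = 1} :=
    Fintype.card_subtype_compl _
  have hsum := W.finrank_add_finrank_orthogonal
  refine (Submodule.eq_of_le_of_finrank_le
    ((Submodule.span_singleton_le_iff_mem _ _).2 he0W) ?_).symm
  rw [finrank_span_singleton he0]
  have hle := Fintype.card_subtype_le fun i => ρs i = 1
  omega

end Floquet

theorem uniform_angle_bound_general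
    (n : ℕ) (f : EuclideanSpace ℝ (Fin n) → EuclideanSpace ℝ (Fin n))
    (hf : ContDiff ℝ 1 f)
    (T : ℝ) (hT : 0 < T)
    -- x₀ is a nondegenerate T-periodic limit cycle of ẋ = f(x)
    (x₀ : ℝ → EuclideanSpace ℝ (Fin n))
    (hx₀ : ∀ t, HasDerivAt x₀ (f (x₀ t)) t)
    (hx₀per : Function.Periodic x₀ T)
    (Y : ℝ → (EuclideanSpace ℝ (Fin n) →L[ℝ] EuclideanSpace ℝ (Fin n)))
    (hY0 : Y 0 = ContinuousLinearMap.id ℝ _)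
    (hY : ∀ t, HasDerivAt Y ((fderiv ℝ f (x₀ t)).comp (Y t)) t)
    (hnondeg : Module.finrank ℝ
      ↥(⨆ k : ℕ, LinearMap.ker
        (((Y T : Module.End ℝ (EuclideanSpace ℝ (Fin n))) - 1) ^ k)) = 1)
    -- x_ε are T-periodic solutions of the perturbed system with ‖x_ε(·+Δ_ε) − x₀‖ ≤ Mε
    (x : ℝ → ℝ → EuclideanSpace ℝ (Fin n)) (Δ : ℝ → ℝ)
    (ε₀ : ℝ)
    -- the adjoint system has n linearly independent Floquet eigenfunctions
    (zs : Fin n → ℝ → EuclideanSpace ℝ (Fin n)) (ρs : Fin n → ℝ)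
    (hzs : ∀ i t, HasDerivAt (zs i)
      (-(ContinuousLinearMap.adjoint (fderiv ℝ f (x₀ t))) (zs i t)) t)
    (hzsF : ∀ i t, zs i (t + T) = ρs i • zs i t)
    (hind : LinearIndependent ℝ (fun i => zs i 0))
    -- the flow and the transversal surface S of Corollary 2.2
    (Ω : ℝ → ℝ → EuclideanSpace ℝ (Fin n) → EuclideanSpace ℝ (Fin n))
    (hΩ_init : ∀ t₀ ξ, Ω t₀ t₀ ξ = ξ)
    (hΩ_sol : ∀ t t₀ ξ, HasDerivAt (fun s => Ω s t₀ ξ) (f (Ω t t₀ ξ)) t)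
    (A : EuclideanSpace ℝ (Fin (n - 1)) →L[ℝ] EuclideanSpace ℝ (Fin n))
    (hA : ∀ (c : ℝ) (w : EuclideanSpace ℝ (Fin (n - 1))),
      c • f (x₀ 0) + A w = 0 → c = 0 ∧ w = 0)
    (S : EuclideanSpace ℝ (Fin (n - 1)) → EuclideanSpace ℝ (Fin n))
    (hS : ∀ w, S w = Ω T 0 (x₀ 0 + A w))
    -- the shifts Δ_ε are defined by intersecting x_ε with S: x_ε(Δ_ε) = S(v_ε), v_ε → 0
    (v : ℝ → EuclideanSpace ℝ (Fin (n - 1)))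
    (hv : ∀ ε ∈ Set.Ioc 0 ε₀, x ε (Δ ε) = S (v ε))
    (hv0 : Filter.Tendsto v (nhdsWithin 0 (Set.Ioi 0)) (nhds 0))
 :
    ∃ α : ℝ, 0 < α ∧ ∃ ε₁ > 0, ∀ ε ∈ Set.Ioc 0 (min ε₁ ε₀),
      x ε (Δ ε) ≠ x₀ 0 →
      ∃ (z : ℝ → EuclideanSpace ℝ (Fin n)) (ρ : ℝ),
        (∀ t, HasDerivAt z
          (-(ContinuousLinearMap.adjoint (fderiv ℝ f (x₀ t))) (z t)) t) ∧
        (∀ t, z (t + T) = ρ • z t) ∧ ρ ≠ 1 ∧ z ≠ 0 ∧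
        |(inner ℝ (z 0) (x ε (Δ ε) - x₀ 0) : ℝ)| /
          (‖z 0‖ * ‖x ε (Δ ε) - x₀ 0‖) ≥ α := by
  set Φ : EuclideanSpace ℝ (Fin n) → ℝ → EuclideanSpace ℝ (Fin n) := fun w t => Ω t 0 (x₀ 0 + w)
  have hΦ : ∀ w t, HasDerivAt (Φ w) (f (Φ w t)) t := fun w t => hΩ_sol t 0 _
  have hΦ0 : ∀ w, Φ w 0 = x₀ 0 + w := fun w => hΩ_init 0 _
  have hx₀T : x₀ T = x₀ 0 := by simpa using hx₀per 0
  have hzsT : ∀ i, zs i T = ρs i • zs i 0 := fun i => by simpa using hzsF i 0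
  have hfx₀ : ∀ t, HasDerivAt (fun s => f (x₀ s)) (fderiv ℝ f (x₀ t) (f (x₀ t))) t := fun t =>
    ((hf.differentiable one_ne_zero) (x₀ t)).hasFDerivAt.comp_hasDerivAt t (hx₀ t)
  have he0 : f (x₀ 0) ≠ 0 := fun h => one_ne_zero (hA 1 0 (by simp [h])).1
  have horth := orthogonal_span_floquet_ne_one_eq hY0 hY hnondeg.le hzs hzsT hind (by simp)
    hfx₀ (by rw [hx₀T]) he0
  obtain ⟨m, hm, hsep⟩ :=
    (LinearMap.range A.toLinearMap).exists_pos_forall_exists_mul_norm_le_abs_inner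
      (fun i : {i // ρs i ≠ 1} => zs i 0) <| by
        rw [horth, Submodule.eq_bot_iff]
        rintro _ ⟨⟨u, rfl⟩, hu⟩
        obtain ⟨c, hc⟩ := Submodule.mem_span_singleton.1 hu
        simp [neg_eq_zero.1 (hA c (-u) (by simp [hc])).2]
  obtain ⟨C, hC, hflow⟩ := exists_forall_norm_flow_sub_le hf hx₀ hΦ hΦ0 T
  have hev : ∀ᶠ w in 𝓝 0, ‖Φ w T - x₀ 0‖ ≤ C * ‖w‖ ∧
      ∀ i, |ρs i * ⟪zs i 0, Φ w T - x₀ 0⟫ - ⟪zs i 0, w⟫| ≤ m / 2 * ‖w‖ := by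
    refine (hflow.mono fun w hw => hx₀T ▸ hw T ⟨hT.le, le_rfl⟩).and (eventually_all.2 fun i => ?_)
    simpa [hzsT, hx₀T, real_inner_smul_left] using
      (isLittleO_inner_flow_sub hf hx₀ hΦ hΦ0 (hzs i) hT.le).def (half_pos hm)
  obtain ⟨ε₁, hε₁, hsub⟩ := mem_nhdsGT_iff_exists_Ioc_subset.1
    (((A.continuous.tendsto' 0 0 (map_zero A)).comp hv0) hev)
  refine ⟨m / (2 * C * (∑ i, ‖zs i T‖ + 1)), by positivity, ε₁, hε₁, fun ε hε hne => ?_⟩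
  obtain ⟨hyw, hlin⟩ := hsub ⟨hε.1, hε.2.trans (min_le_left _ _)⟩
  rw [hv ε ⟨hε.1, hε.2.trans (min_le_right _ _)⟩, hS] at hne ⊢
  have hy : Φ (A (v ε)) T - x₀ 0 ≠ 0 := sub_ne_zero.2 hne
  have hw : A (v ε) ≠ 0 := fun h => hy (norm_le_zero_iff.1 (by simpa [h] using hyw))
  obtain ⟨i, hi⟩ := hsep _ (LinearMap.mem_range_self A.toLinearMap (v ε)) hw
  have hK : |ρs i| * ‖zs i 0‖ ≤ ∑ j, ‖zs j T‖ + 1 := by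
    rw [← Real.norm_eq_abs, ← norm_smul, ← hzsT]
    linarith [Finset.single_le_sum (fun j _ => norm_nonneg (zs j T)) (Finset.mem_univ i.1)]
  exact ⟨zs i, ρs i, hzs i, hzsF i, i.2, fun h => hind.ne_zero i.1 (congr_fun h 0),
    div_le_abs_inner_div_of_abs_mul_inner_sub_le hm (hind.ne_zero i.1) hy hK hyw hi (hlin i)⟩

/-- Lemma 3.6, uniform angle bound: assume the hypotheses of Theorem 3.1,
that the adjoint system has `n` linearly independent Floquet eigenfunctions, and that the
shifts `Δ_ε` come from the transversal surface `S` as in Corollary 2.2. Then there is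
`α* > 0` such that for all small `ε > 0` with `x_ε(Δ_ε) ≠ x₀(0)` there is a
not-`T`-periodic eigenfunction `z` with `|cos∠(z(0), x_ε(Δ_ε) − x₀(0))| ≥ α*`. -/
theorem uniform_angle_bound
    (n : ℕ) (f : EuclideanSpace ℝ (Fin n) → EuclideanSpace ℝ (Fin n))
    (g : ℝ → EuclideanSpace ℝ (Fin n) → ℝ → EuclideanSpace ℝ (Fin n))
    (hf : ContDiff ℝ 1 f)
    (hg : Continuous fun p : ℝ × EuclideanSpace ℝ (Fin n) × ℝ => g p.1 p.2.1 p.2.2)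
    (T : ℝ) (hT : 0 < T)
    (hgper : ∀ t x ε, g (t + T) x ε = g t x ε)
    -- x₀ is a nondegenerate T-periodic limit cycle of ẋ = f(x)
    (x₀ : ℝ → EuclideanSpace ℝ (Fin n))
    (hx₀ : ∀ t, HasDerivAt x₀ (f (x₀ t)) t)
    (hx₀per : Function.Periodic x₀ T)
    (Y : ℝ → (EuclideanSpace ℝ (Fin n) →L[ℝ] EuclideanSpace ℝ (Fin n)))
    (hY0 : Y 0 = ContinuousLinearMap.id ℝ _)
    (hY : ∀ t, HasDerivAt Y ((fderiv ℝ f (x₀ t)).comp (Y t)) t)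
    (hnondeg : Module.finrank ℝ
      ↥(⨆ k : ℕ, LinearMap.ker
        (((Y T : Module.End ℝ (EuclideanSpace ℝ (Fin n))) - 1) ^ k)) = 1)
    -- x_ε are T-periodic solutions of the perturbed system with ‖x_ε(·+Δ_ε) − x₀‖ ≤ Mε
    (x : ℝ → ℝ → EuclideanSpace ℝ (Fin n)) (Δ : ℝ → ℝ)
    (M ε₀ : ℝ) (hM : 0 < M) (hε₀ : 0 < ε₀)
    (hx : ∀ ε ∈ Set.Ioc 0 ε₀, ∀ t,
      HasDerivAt (x ε) (f (x ε t) + ε • g t (x ε t) ε) t)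
    (hxper : ∀ ε ∈ Set.Ioc 0 ε₀, Function.Periodic (x ε) T)
    (hΔ : Filter.Tendsto Δ (nhdsWithin 0 (Set.Ioi 0)) (nhds 0))
    (hbound : ∀ ε ∈ Set.Ioc 0 ε₀, ∀ t ∈ Set.Icc (0:ℝ) T,
      ‖x ε (t + Δ ε) - x₀ t‖ ≤ M * ε)
    -- the adjoint system has n linearly independent Floquet eigenfunctions
    (zs : Fin n → ℝ → EuclideanSpace ℝ (Fin n)) (ρs : Fin n → ℝ)
    (hzs : ∀ i t, HasDerivAt (zs i)
      (-(ContinuousLinearMap.adjoint (fderiv ℝ f (x₀ t))) (zs i t)) t)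
    (hzsF : ∀ i t, zs i (t + T) = ρs i • zs i t)
    (hind : LinearIndependent ℝ (fun i => zs i 0))
    -- the flow and the transversal surface S of Corollary 2.2
    (Ω : ℝ → ℝ → EuclideanSpace ℝ (Fin n) → EuclideanSpace ℝ (Fin n))
    (hΩ_init : ∀ t₀ ξ, Ω t₀ t₀ ξ = ξ)
    (hΩ_sol : ∀ t t₀ ξ, HasDerivAt (fun s => Ω s t₀ ξ) (f (Ω t t₀ ξ)) t)
    (A : EuclideanSpace ℝ (Fin (n - 1)) →L[ℝ] EuclideanSpace ℝ (Fin n))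
    (hA : ∀ (c : ℝ) (w : EuclideanSpace ℝ (Fin (n - 1))),
      c • f (x₀ 0) + A w = 0 → c = 0 ∧ w = 0)
    (S : EuclideanSpace ℝ (Fin (n - 1)) → EuclideanSpace ℝ (Fin n))
    (hS : ∀ w, S w = Ω T 0 (x₀ 0 + A w))
    -- the shifts Δ_ε are defined by intersecting x_ε with S: x_ε(Δ_ε) = S(v_ε), v_ε → 0
    (v : ℝ → EuclideanSpace ℝ (Fin (n - 1)))
    (hv : ∀ ε ∈ Set.Ioc 0 ε₀, x ε (Δ ε) = S (v ε))
    (hv0 : Filter.Tendsto v (nhdsWithin 0 (Set.Ioi 0)) (nhds 0))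
 :
    ∃ α : ℝ, 0 < α ∧ ∃ ε₁ > 0, ∀ ε ∈ Set.Ioc 0 (min ε₁ ε₀),
      x ε (Δ ε) ≠ x₀ 0 →
      ∃ (z : ℝ → EuclideanSpace ℝ (Fin n)) (ρ : ℝ),
        (∀ t, HasDerivAt z
          (-(ContinuousLinearMap.adjoint (fderiv ℝ f (x₀ t))) (z t)) t) ∧
        (∀ t, z (t + T) = ρ • z t) ∧ ρ ≠ 1 ∧ z ≠ 0 ∧
        |(inner ℝ (z 0) (x ε (Δ ε) - x₀ 0) : ℝ)| /
          (‖z 0‖ * ‖x ε (Δ ε) - x₀ 0‖) ≥ α :=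
  uniform_angle_bound_general n f hf T hT x₀ hx₀ hx₀per Y hY0 hY hnondeg x Δ ε₀ zs ρs hzs hzsF hind
    Ω hΩ_init hΩ_sol A hA S hS v hv hv0
end
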